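/- arXiv:2202.09889 — 9 statements merged into one kernel-verified Lean document; each statement's English description precedes it below -/
import Mathlib

section
/- Let X ∈ ℝ^{n×d}, Σ ∈ ℝ^{d×d} symmetric positive definite, σ > 0, ρ ≥ 0 with Σ − (ρ/d) X^T X ≻ 0, and define A(ρ) = (I − ρσ²(Σ − (ρ/d)X^T X)^{-1})(X^T X + dσ² I)^{-1} X^T. Then A(ρ)X − I = −dσ²(Σ − (ρ/d)X^T X)^{-1} Σ (X^T X + dσ² I)^{-1}. -/
/-!
Write `K = XᵀX`, `B = K + c•1` with `c = dσ²`, `M = Σ − t•K` with `t = ρ/d`, so that `ρσ² = t c`.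
Since `B⁻¹K = 1 − c B⁻¹` and `K B⁻¹ = 1 − c B⁻¹`, both sides expand to
`−c B⁻¹ − t c M⁻¹ + t c² M⁻¹ B⁻¹`: on the right one substitutes `Σ = M + t•K`.
-/

open Matrix

namespace Matrix

variable {ι R : Type*} [Fintype ι] [DecidableEq ι] [CommRing R]

theorem inv_add_smul_one_mul_self {K : Matrix ι ι R} {c : R} (hB : IsUnit (K + c • 1).det) :
    (K + c • 1)⁻¹ * K = 1 - c • (K + c • 1)⁻¹ := by
  have h := nonsing_inv_mul _ hB
  rwa [Matrix.mul_add, Matrix.mul_smul, Matrix.mul_one, ← eq_sub_iff_add_eq] at h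

theorem self_mul_inv_add_smul_one {K : Matrix ι ι R} {c : R} (hB : IsUnit (K + c • 1).det) :
    K * (K + c • 1)⁻¹ = 1 - c • (K + c • 1)⁻¹ := by
  have h := mul_nonsing_inv _ hB
  rwa [Matrix.add_mul, Matrix.smul_mul, Matrix.one_mul, ← eq_sub_iff_add_eq] at h

theorem one_sub_smul_inv_mul_inv_add_smul_one_mul_sub_one {K M S : Matrix ι ι R} {c t : R}
    (hS : S = M + t • K) (hM : IsUnit M.det) (hB : IsUnit (K + c • 1).det) :
    (1 - (t * c) • M⁻¹) * (K + c • 1)⁻¹ * K - 1 = -(c • (M⁻¹ * S * (K + c • 1)⁻¹)) := by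
  rw [Matrix.mul_assoc, inv_add_smul_one_mul_self hB, hS, Matrix.mul_add, Matrix.add_mul,
    nonsing_inv_mul _ hM, Matrix.mul_smul, Matrix.smul_mul, Matrix.mul_assoc M⁻¹,
    self_mul_inv_add_smul_one hB]
  simp only [Matrix.mul_sub, Matrix.sub_mul, Matrix.mul_smul, Matrix.smul_mul, Matrix.mul_one,
    Matrix.one_mul]
  module

end Matrix

theorem stmt3_general (n d : ℕ) (hd : 0 < d) (X : Matrix (Fin n) (Fin d) ℝ)
    (Sigma : Matrix (Fin d) (Fin d) ℝ)
    (σ ρ : ℝ) (hσ : 0 < σ)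
    (hpd : (Sigma - (ρ / (d : ℝ)) • (Xᵀ * X)).PosDef) :
    ((1 : Matrix (Fin d) (Fin d) ℝ)
        - (ρ * σ ^ 2) • (Sigma - (ρ / (d : ℝ)) • (Xᵀ * X))⁻¹)
      * (Xᵀ * X + ((d : ℝ) * σ ^ 2) • 1)⁻¹ * Xᵀ * X - 1
    = -(((d : ℝ) * σ ^ 2) •
        ((Sigma - (ρ / (d : ℝ)) • (Xᵀ * X))⁻¹ * Sigma
          * (Xᵀ * X + ((d : ℝ) * σ ^ 2) • 1)⁻¹)) := by
  have hK : (Xᵀ * X).PosSemidef := by simpa using posSemidef_conjTranspose_mul_self X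
  have hB : (Xᵀ * X + ((d : ℝ) * σ ^ 2) • (1 : Matrix (Fin d) (Fin d) ℝ)).PosDef :=
    PosDef.posSemidef_add hK (PosDef.one.smul (by positivity))
  have hscal : ρ * σ ^ 2 = ρ / (d : ℝ) * ((d : ℝ) * σ ^ 2) := by field_simp
  rw [hscal, Matrix.mul_assoc (_ * _)]
  exact one_sub_smul_inv_mul_inv_add_smul_one_mul_sub_one (by abel)
    ((isUnit_iff_isUnit_det _).mp hpd.isUnit) ((isUnit_iff_isUnit_det _).mp hB.isUnit)

/-- With `A(ρ) = (I − ρσ²(Σ − (ρ/d)XᵀX)⁻¹)(XᵀX + dσ²I)⁻¹Xᵀ`,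
`A(ρ)X − I = −dσ²(Σ − (ρ/d)XᵀX)⁻¹ Σ (XᵀX + dσ²I)⁻¹`. -/
theorem stmt3 (n d : ℕ) (hd : 0 < d) (X : Matrix (Fin n) (Fin d) ℝ)
    (Sigma : Matrix (Fin d) (Fin d) ℝ) (hSig : Sigma.PosDef)
    (σ ρ : ℝ) (hσ : 0 < σ) (hρ : 0 ≤ ρ)
    (hpd : (Sigma - (ρ / (d : ℝ)) • (Xᵀ * X)).PosDef) :
    ((1 : Matrix (Fin d) (Fin d) ℝ)
        - (ρ * σ ^ 2) • (Sigma - (ρ / (d : ℝ)) • (Xᵀ * X))⁻¹)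
      * (Xᵀ * X + ((d : ℝ) * σ ^ 2) • 1)⁻¹ * Xᵀ * X - 1
    = -(((d : ℝ) * σ ^ 2) •
        ((Sigma - (ρ / (d : ℝ)) • (Xᵀ * X))⁻¹ * Sigma
          * (Xᵀ * X + ((d : ℝ) * σ ^ 2) • 1)⁻¹)) :=
  stmt3_general n d hd X Sigma σ ρ hσ hpd
end

section
/- Under the same setup with X X^T nonsingular, X A(ρ) − I_n = −dσ² X (Σ − (ρ/d)X^T X)^{-1} Σ X^T (X X^T)^{-1} (X X^T + dσ² I_n)^{-1}. -/
/-!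
Put `B = Σ − (ρ/d)XᵀX`, `c = dσ²` and `N = XXᵀ + c`. The push-through identity
`(XᵀX + c)⁻¹Xᵀ = Xᵀ N⁻¹` and `XXᵀN⁻¹ = 1 − cN⁻¹` turn the left side into
`−cN⁻¹ − ρσ² X B⁻¹ Xᵀ N⁻¹`. On the right, `Σ = B + (ρ/d)XᵀX` gives
`X B⁻¹ Σ Xᵀ (XXᵀ)⁻¹ = 1 + (ρ/d) X B⁻¹ Xᵀ`, and the two sides agree because `ρσ² = c · ρ/d`.
-/

open Matrix

namespace Matrix

variable {m n R : Type*} [Fintype m] [Fintype n] [DecidableEq m] [DecidableEq n] [CommRing R]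

theorem inv_mul_add_smul_one_mul_eq (A : Matrix m n R) (B : Matrix n m R) (c : R)
    (hBA : IsUnit (B * A + c • 1).det) (hAB : IsUnit (A * B + c • 1).det) :
    (B * A + c • 1)⁻¹ * B = B * (A * B + c • 1)⁻¹ := by
  have hcomm : B * (A * B + c • 1) = (B * A + c • 1) * B := by
    simp only [Matrix.mul_add, Matrix.add_mul, Matrix.mul_smul, Matrix.smul_mul, Matrix.mul_one,
      Matrix.one_mul, Matrix.mul_assoc]
  calc (B * A + c • 1)⁻¹ * B
      = (B * A + c • 1)⁻¹ * (B * (A * B + c • 1)) * (A * B + c • 1)⁻¹ := by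
        rw [Matrix.mul_assoc, mul_nonsing_inv_cancel_right _ _ hAB]
    _ = B * (A * B + c • 1)⁻¹ := by
        rw [hcomm, nonsing_inv_mul_cancel_left _ _ hBA]

theorem mul_inv_add_smul_one (A : Matrix n n R) (c : R) (h : IsUnit (A + c • 1).det) :
    A * (A + c • 1)⁻¹ = 1 - c • (A + c • 1)⁻¹ := by
  calc A * (A + c • 1)⁻¹ = (A + c • 1 - c • 1) * (A + c • 1)⁻¹ := by rw [add_sub_cancel_right]
    _ = 1 - c • (A + c • 1)⁻¹ := by
        rw [Matrix.sub_mul, mul_nonsing_inv _ h, Matrix.smul_mul, Matrix.one_mul]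

theorem mul_inv_mul_add_smul_mul_mul_inv (X : Matrix m n R) (Y : Matrix n m R) (B : Matrix n n R)
    (t : R) (hB : IsUnit B.det) (hXY : IsUnit (X * Y).det) :
    X * B⁻¹ * (B + t • (Y * X)) * Y * (X * Y)⁻¹ = 1 + t • (X * B⁻¹ * Y) := by
  rw [Matrix.mul_add, nonsing_inv_mul_cancel_right _ _ hB, Matrix.mul_smul, Matrix.add_mul,
    Matrix.add_mul, mul_nonsing_inv _ hXY, Matrix.smul_mul, Matrix.smul_mul, ← Matrix.mul_assoc,
    Matrix.mul_assoc (X * B⁻¹ * Y), mul_nonsing_inv_cancel_right _ _ hXY]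

end Matrix

theorem Matrix.PosSemidef.posDef_add_smul_one {n : Type*} [DecidableEq n] {A : Matrix n n ℝ}
    (hA : A.PosSemidef) {c : ℝ} (hc : 0 < c) : (A + c • 1).PosDef :=
  PosDef.posSemidef_add hA (PosDef.one.smul hc)

theorem stmt4_general (n d : ℕ) (hd : 0 < d)
    (X : Matrix (Fin n) (Fin d) ℝ) (hX : IsUnit (X * Xᵀ).det)
    (Sigma : Matrix (Fin d) (Fin d) ℝ)
    (σ ρ : ℝ) (hσ : 0 < σ)
    (hpd : (Sigma - (ρ / (d : ℝ)) • (Xᵀ * X)).PosDef) :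
    X * (((1 : Matrix (Fin d) (Fin d) ℝ)
          - (ρ * σ ^ 2) • (Sigma - (ρ / (d : ℝ)) • (Xᵀ * X))⁻¹)
        * (Xᵀ * X + ((d : ℝ) * σ ^ 2) • 1)⁻¹ * Xᵀ) - 1
    = -(((d : ℝ) * σ ^ 2) •
        (X * (Sigma - (ρ / (d : ℝ)) • (Xᵀ * X))⁻¹ * Sigma * Xᵀ
          * (X * Xᵀ)⁻¹ * (X * Xᵀ + ((d : ℝ) * σ ^ 2) • 1)⁻¹)) := by
  set c := (d : ℝ) * σ ^ 2
  set t := ρ / (d : ℝ)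
  set B := Sigma - t • (Xᵀ * X)
  have hc : 0 < c := by positivity
  have hk : ρ * σ ^ 2 = c * t := by simp only [c, t]; field_simp
  have hB : IsUnit B.det := hpd.det_pos.ne'.isUnit
  have hM : IsUnit (Xᵀ * X + c • 1).det := PosSemidef.posDef_add_smul_one
    (by simpa using posSemidef_conjTranspose_mul_self X) hc |>.det_pos.ne'.isUnit
  have hN : IsUnit (X * Xᵀ + c • 1).det := PosSemidef.posDef_add_smul_one
    (by simpa using posSemidef_self_mul_conjTranspose X) hc |>.det_pos.ne'.isUnit
  rw [show Sigma = B + t • (Xᵀ * X) from (sub_add_cancel _ _).symm,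
    mul_inv_mul_add_smul_mul_mul_inv X Xᵀ B t hB hX, Matrix.mul_assoc _ _ Xᵀ,
    inv_mul_add_smul_one_mul_eq X Xᵀ c hM hN, Matrix.sub_mul, Matrix.one_mul, Matrix.mul_sub,
    ← Matrix.mul_assoc X Xᵀ, mul_inv_add_smul_one _ c hN, hk]
  simp only [Matrix.add_mul, Matrix.one_mul, Matrix.smul_mul, Matrix.mul_smul, smul_add,
    mul_smul, Matrix.mul_assoc]
  abel

/-- With `A(ρ)` as in the reduction by strong duality and `XXᵀ` nonsingular,
`X A(ρ) − Iₙ = −dσ² X (Σ − (ρ/d)XᵀX)⁻¹ Σ Xᵀ (XXᵀ)⁻¹ (XXᵀ + dσ²Iₙ)⁻¹`. -/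
theorem stmt4 (n d : ℕ) (hnd : n ≤ d) (hd : 0 < d)
    (X : Matrix (Fin n) (Fin d) ℝ) (hX : IsUnit (X * Xᵀ).det)
    (Sigma : Matrix (Fin d) (Fin d) ℝ) (hSig : Sigma.PosDef)
    (σ ρ : ℝ) (hσ : 0 < σ) (hρ : 0 ≤ ρ)
    (hpd : (Sigma - (ρ / (d : ℝ)) • (Xᵀ * X)).PosDef) :
    X * (((1 : Matrix (Fin d) (Fin d) ℝ)
          - (ρ * σ ^ 2) • (Sigma - (ρ / (d : ℝ)) • (Xᵀ * X))⁻¹)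
        * (Xᵀ * X + ((d : ℝ) * σ ^ 2) • 1)⁻¹ * Xᵀ) - 1
    = -(((d : ℝ) * σ ^ 2) •
        (X * (Sigma - (ρ / (d : ℝ)) • (Xᵀ * X))⁻¹ * Sigma * Xᵀ
          * (X * Xᵀ)⁻¹ * (X * Xᵀ + ((d : ℝ) * σ ^ 2) • 1)⁻¹)) :=
  stmt4_general n d hd X hX Sigma σ ρ hσ hpd
end

section
/- Define P(A) = (1/d)‖Σ^{1/2}(AX − I)‖_F² + σ²‖Σ^{1/2}A‖_F². With A(ρ) as above and X X^T nonsingular, P(A(ρ)) − P(A(0)) = (ρ²σ⁴/d)·Tr((Σ − (ρ/d)X^T X)^{-1} Σ (Σ − (ρ/d)X^T X)^{-1} X^T X (X^T X + dσ² I)^{-1}). -/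
open Matrix

/-- Squared Frobenius norm. -/
noncomputable def frobSq {m k : ℕ} (A : Matrix (Fin m) (Fin k) ℝ) : ℝ :=
  Matrix.trace (Aᵀ * A)

/-- The dual-optimal linear estimator matrix `A(ρ)`. -/
noncomputable def Adual (n d : ℕ) (X : Matrix (Fin n) (Fin d) ℝ)
    (Sigma : Matrix (Fin d) (Fin d) ℝ) (σ ρ : ℝ) : Matrix (Fin d) (Fin n) ℝ :=
  ((1 : Matrix (Fin d) (Fin d) ℝ)
      - (ρ * σ ^ 2) • (Sigma - (ρ / (d : ℝ)) • (Xᵀ * X))⁻¹)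
    * (Xᵀ * X + ((d : ℝ) * σ ^ 2) • 1)⁻¹ * Xᵀ

/-- Prediction error functional `P(A) = (1/d)‖Σ^{1/2}(AX − I)‖_F² + σ²‖Σ^{1/2}A‖_F²`,
written using a square root `S` of `Σ`. -/
noncomputable def predErr (n d : ℕ) (X : Matrix (Fin n) (Fin d) ℝ)
    (S : Matrix (Fin d) (Fin d) ℝ) (σ : ℝ) (A : Matrix (Fin d) (Fin n) ℝ) : ℝ :=
  (1 / (d : ℝ)) * frobSq (S * (A * X - 1)) + σ ^ 2 * frobSq (S * A)

/-!
`P` is a quadratic functional of `A`, and `A(0) = (XᵀX + dσ²I)⁻¹Xᵀ` is its critical point: the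
push-through identity `Xᵀ(XXᵀ + dσ²I) = (XᵀX + dσ²I)Xᵀ` gives `A(0)(XXᵀ + dσ²I) = Xᵀ`, which is
exactly the vanishing of the linear term in
`P(A(0) + E) = P(A(0)) + (linear) + (1/d)·tr(EᵀΣE(XXᵀ + dσ²I))`.
Since `A(ρ) = A(0) + E` with `E = −ρσ² C⁻¹A(0)`, `C = Σ − (ρ/d)XᵀX`, the increment is the quadratic
term alone, and using `A(0)(XXᵀ + dσ²I) = Xᵀ` once more and cycling the trace it collapses to
`(ρ²σ⁴/d)·tr(C⁻¹ΣC⁻¹XᵀX(XᵀX + dσ²I)⁻¹)`.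
-/

lemma frobSq_add {m k : ℕ} (U V : Matrix (Fin m) (Fin k) ℝ) :
    frobSq (U + V) = frobSq U + 2 * trace (Vᵀ * U) + frobSq V := by
  have h : trace (Uᵀ * V) = trace (Vᵀ * U) := by
    rw [← trace_transpose, transpose_mul, transpose_transpose]
  simp only [frobSq, transpose_add, Matrix.add_mul, Matrix.mul_add, trace_add, h]
  ring

lemma transpose_mul_mul_transpose_add_smul_one {n d : ℕ} (X : Matrix (Fin n) (Fin d) ℝ) (c : ℝ) :
    Xᵀ * (X * Xᵀ + c • 1) = (Xᵀ * X + c • 1) * Xᵀ := by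
  simp only [Matrix.mul_add, Matrix.add_mul, Matrix.mul_smul, Matrix.smul_mul, Matrix.mul_one,
    Matrix.one_mul, Matrix.mul_assoc]

lemma predErr_add {n d : ℕ} (hd : d ≠ 0) (X : Matrix (Fin n) (Fin d) ℝ)
    (S : Matrix (Fin d) (Fin d) ℝ) (σ : ℝ) (A E : Matrix (Fin d) (Fin n) ℝ) :
    predErr n d X S σ (A + E) = predErr n d X S σ A
      + 2 / d * trace (Eᵀ * (Sᵀ * S) * (A * (X * Xᵀ + ((d : ℝ) * σ ^ 2) • 1) - Xᵀ))
      + 1 / d * trace (Eᵀ * (Sᵀ * S) * E * (X * Xᵀ + ((d : ℝ) * σ ^ 2) • 1)) := by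
  have hcyc : ∀ Z : Matrix (Fin d) (Fin d) ℝ, trace (Xᵀ * (Eᵀ * Z)) = trace (Eᵀ * Z * Xᵀ) :=
    fun Z => trace_mul_comm _ _
  unfold predErr
  rw [Matrix.add_mul, add_sub_right_comm, Matrix.mul_add, Matrix.mul_add, frobSq_add, frobSq_add]
  simp only [frobSq, transpose_mul, Matrix.mul_sub, Matrix.mul_add, trace_sub, trace_add,
    Matrix.mul_smul, trace_smul, Matrix.mul_one, Matrix.mul_assoc, hcyc, smul_eq_mul]
  field_simp
  ring

lemma predErr_add_sub_of_mul_eq {n d : ℕ} (hd : d ≠ 0) (X : Matrix (Fin n) (Fin d) ℝ)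
    (S : Matrix (Fin d) (Fin d) ℝ) (σ : ℝ) {A : Matrix (Fin d) (Fin n) ℝ}
    (hA : A * (X * Xᵀ + ((d : ℝ) * σ ^ 2) • 1) = Xᵀ) (E : Matrix (Fin d) (Fin n) ℝ) :
    predErr n d X S σ (A + E) - predErr n d X S σ A
      = 1 / d * trace (Eᵀ * (Sᵀ * S) * E * (X * Xᵀ + ((d : ℝ) * σ ^ 2) • 1)) := by
  rw [predErr_add hd, hA, sub_self, Matrix.mul_zero, trace_zero, mul_zero, add_zero,
    add_sub_cancel_left]

lemma posDef_transpose_mul_self_add_smul_one {n d : ℕ} (X : Matrix (Fin n) (Fin d) ℝ) {c : ℝ}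
    (hc : 0 < c) : (Xᵀ * X + c • 1).PosDef :=
  PosDef.posSemidef_add (by simpa using posSemidef_conjTranspose_mul_self X) (PosDef.one.smul hc)

lemma trace_transpose_mul_mul_mul_of_mul_eq {n d : ℕ} (X : Matrix (Fin n) (Fin d) ℝ)
    {G : Matrix (Fin n) (Fin n) ℝ} {B R : Matrix (Fin d) (Fin d) ℝ} (Q : Matrix (Fin d) (Fin d) ℝ)
    (hB : Bᵀ = B) (hR : Rᵀ = R) (hBG : B * Xᵀ * G = Xᵀ) :
    trace ((R * (B * Xᵀ))ᵀ * Q * (R * (B * Xᵀ)) * G) = trace (R * Q * R * (Xᵀ * X) * B) :=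
  calc _ = trace ((B * Xᵀ)ᵀ * (R * Q * R * (B * Xᵀ * G))) := by
        rw [transpose_mul _ (B * Xᵀ), hR]; simp only [Matrix.mul_assoc]
    _ = trace (R * Q * R * Xᵀ * (B * Xᵀ)ᵀ) := by rw [hBG, trace_mul_comm]
    _ = _ := by rw [transpose_mul, transpose_transpose, hB]; simp only [Matrix.mul_assoc]

theorem stmt5_general (n d : ℕ) (hd : 0 < d)
    (X : Matrix (Fin n) (Fin d) ℝ)
    (Sigma S : Matrix (Fin d) (Fin d) ℝ)
    (hS : S.PosSemidef) (hSsq : S * S = Sigma)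
    (σ ρ : ℝ) (hσ : 0 < σ) :
    predErr n d X S σ (Adual n d X Sigma σ ρ) - predErr n d X S σ (Adual n d X Sigma σ 0)
      = (ρ ^ 2 * σ ^ 4 / (d : ℝ)) *
          Matrix.trace ((Sigma - (ρ / (d : ℝ)) • (Xᵀ * X))⁻¹ * Sigma
            * (Sigma - (ρ / (d : ℝ)) • (Xᵀ * X))⁻¹ * (Xᵀ * X)
            * (Xᵀ * X + ((d : ℝ) * σ ^ 2) • 1)⁻¹) := by
  set K := Xᵀ * X + ((d : ℝ) * σ ^ 2) • 1
  set R := (Sigma - (ρ / (d : ℝ)) • (Xᵀ * X))⁻¹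
  have hKdet : IsUnit K.det :=
    (posDef_transpose_mul_self_add_smul_one X (by positivity)).det_pos.ne'.isUnit
  have hSt : Sᵀ = S := hS.isHermitian
  have hSigt : Sigmaᵀ = Sigma := by rw [← hSsq, transpose_mul, hSt]
  have hKt : K⁻¹ᵀ = K⁻¹ := by simp [K, transpose_nonsing_inv]
  have hRt : Rᵀ = R := by simp [R, transpose_nonsing_inv, hSigt]
  have hA0 : Adual n d X Sigma σ 0 = K⁻¹ * Xᵀ := by simp [Adual, K]
  have hAρ : Adual n d X Sigma σ ρ = K⁻¹ * Xᵀ + (-(ρ * σ ^ 2)) • (R * (K⁻¹ * Xᵀ)) := by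
    rw [Adual, Matrix.mul_assoc, Matrix.sub_mul, Matrix.one_mul, Matrix.smul_mul, sub_eq_add_neg,
      neg_smul]
  have hstat : K⁻¹ * Xᵀ * (X * Xᵀ + ((d : ℝ) * σ ^ 2) • 1) = Xᵀ := by
    rw [Matrix.mul_assoc, transpose_mul_mul_transpose_add_smul_one, ← Matrix.mul_assoc,
      nonsing_inv_mul _ hKdet, Matrix.one_mul]
  rw [hAρ, hA0, predErr_add_sub_of_mul_eq hd.ne' X S σ hstat, hSt, hSsq]
  simp only [transpose_smul, Matrix.smul_mul, Matrix.mul_smul, trace_smul, smul_eq_mul,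
    trace_transpose_mul_mul_mul_of_mul_eq X _ hKt hRt hstat]
  ring

/-- `P(A(ρ)) − P(A(0)) = (ρ²σ⁴/d)·Tr((Σ − (ρ/d)XᵀX)⁻¹ Σ (Σ − (ρ/d)XᵀX)⁻¹ XᵀX (XᵀX + dσ²I)⁻¹)`. -/
theorem stmt5 (n d : ℕ) (hnd : n ≤ d) (hd : 0 < d)
    (X : Matrix (Fin n) (Fin d) ℝ) (hX : IsUnit (X * Xᵀ).det)
    (Sigma S : Matrix (Fin d) (Fin d) ℝ) (hSig : Sigma.PosDef)
    (hS : S.PosSemidef) (hSsq : S * S = Sigma)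
    (σ ρ : ℝ) (hσ : 0 < σ) (hρ : 0 ≤ ρ)
    (hpd : (Sigma - (ρ / (d : ℝ)) • (Xᵀ * X)).PosDef) :
    predErr n d X S σ (Adual n d X Sigma σ ρ) - predErr n d X S σ (Adual n d X Sigma σ 0)
      = (ρ ^ 2 * σ ^ 4 / (d : ℝ)) *
          Matrix.trace ((Sigma - (ρ / (d : ℝ)) • (Xᵀ * X))⁻¹ * Sigma
            * (Sigma - (ρ / (d : ℝ)) • (Xᵀ * X))⁻¹ * (Xᵀ * X)
            * (Xᵀ * X + ((d : ℝ) * σ ^ 2) • 1)⁻¹) :=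
  stmt5_general n d hd X Sigma S hS hSsq σ ρ hσ
end

section
/- Define T(A) = (1/(nd))‖XAX − X‖_F² + (σ²/n)‖XA − I‖_F². With A(ρ) as above and X X^T nonsingular, T(A(ρ)) = (dσ⁴/n)·Tr(Σ(Σ − (ρ/d)X^T X)^{-1} X^T X (Σ − (ρ/d)X^T X)^{-1} Σ (X^T X)^† (X^T X + dσ² I)^{-1}), where (X^T X)^† denotes the Moore–Penrose pseudoinverse. -/
open Matrix

/-- Training error functional `T(A) = (1/(nd))‖XAX − X‖_F² + (σ²/n)‖XA − I‖_F²`. -/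
noncomputable def trainErr (n d : ℕ) (X : Matrix (Fin n) (Fin d) ℝ)
    (σ : ℝ) (A : Matrix (Fin d) (Fin n) ℝ) : ℝ :=
  (1 / ((n : ℝ) * (d : ℝ))) * frobSq (X * A * X - X) + (σ ^ 2 / (n : ℝ)) * frobSq (X * A - 1)

/-- `M` is the Moore–Penrose pseudoinverse of `N`. -/
def IsMoorePenrose {k : ℕ} (N M : Matrix (Fin k) (Fin k) ℝ) : Prop :=
  N * M * N = N ∧ M * N * M = M ∧ (N * M)ᵀ = N * M ∧ (M * N)ᵀ = M * N

/-- Uniqueness of the Moore–Penrose pseudoinverse. -/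
lemma mp_unique {k : ℕ} {N M₁ M₂ : Matrix (Fin k) (Fin k) ℝ}
    (h1 : IsMoorePenrose N M₁) (h2 : IsMoorePenrose N M₂) : M₁ = M₂ := by
  obtain ⟨a1, b1, c1, d1⟩ := h1
  obtain ⟨a2, b2, c2, d2⟩ := h2
  have hN : N * M₁ = N * M₂ := by
    calc N * M₁ = (N * M₁)ᵀ := c1.symm
      _ = M₁ᵀ * Nᵀ := Matrix.transpose_mul _ _
      _ = M₁ᵀ * (N * M₂ * N)ᵀ := by rw [a2]
      _ = M₁ᵀ * (Nᵀ * (N * M₂)ᵀ) := by rw [Matrix.transpose_mul (N * M₂) N]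
      _ = (M₁ᵀ * Nᵀ) * (N * M₂)ᵀ := by rw [Matrix.mul_assoc]
      _ = (N * M₁)ᵀ * (N * M₂)ᵀ := by rw [Matrix.transpose_mul N M₁]
      _ = (N * M₁) * (N * M₂) := by rw [c1, c2]
      _ = (N * M₁ * N) * M₂ := by simp only [Matrix.mul_assoc]
      _ = N * M₂ := by rw [a1]
  have hM : M₁ * N = M₂ * N := by
    calc M₁ * N = (M₁ * N)ᵀ := d1.symm
      _ = Nᵀ * M₁ᵀ := Matrix.transpose_mul _ _
      _ = (N * M₂ * N)ᵀ * M₁ᵀ := by rw [a2]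
      _ = (N * (M₂ * N))ᵀ * M₁ᵀ := by rw [Matrix.mul_assoc]
      _ = ((M₂ * N)ᵀ * Nᵀ) * M₁ᵀ := by rw [Matrix.transpose_mul N (M₂ * N)]
      _ = (M₂ * N) * (Nᵀ * M₁ᵀ) := by rw [d2, Matrix.mul_assoc]
      _ = (M₂ * N) * (M₁ * N)ᵀ := by rw [Matrix.transpose_mul M₁ N]
      _ = (M₂ * N) * (M₁ * N) := by rw [d1]
      _ = M₂ * (N * M₁ * N) := by simp only [Matrix.mul_assoc]
      _ = M₂ * N := by rw [a1]
  calc M₁ = M₁ * N * M₁ := b1.symm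
    _ = M₁ * (N * M₁) := by rw [Matrix.mul_assoc]
    _ = M₁ * (N * M₂) := by rw [hN]
    _ = M₁ * N * M₂ := by rw [Matrix.mul_assoc]
    _ = M₂ * N * M₂ := by rw [hM]
    _ = M₂ := b2

/-- `T(A(ρ)) = (dσ⁴/n)·Tr(Σ(Σ − (ρ/d)XᵀX)⁻¹ XᵀX (Σ − (ρ/d)XᵀX)⁻¹ Σ (XᵀX)† (XᵀX + dσ²I)⁻¹)`. -/
theorem stmt6 (n d : ℕ) (hnd : n ≤ d) (hn : 0 < n) (hd : 0 < d)
    (X : Matrix (Fin n) (Fin d) ℝ) (hX : IsUnit (X * Xᵀ).det)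
    (Sigma : Matrix (Fin d) (Fin d) ℝ) (hSig : Sigma.PosDef)
    (σ ρ : ℝ) (hσ : 0 < σ) (hρ : 0 ≤ ρ)
    (hpd : (Sigma - (ρ / (d : ℝ)) • (Xᵀ * X)).PosDef)
    (Pinv : Matrix (Fin d) (Fin d) ℝ) (hPinv : IsMoorePenrose (Xᵀ * X) Pinv) :
    trainErr n d X σ (Adual n d X Sigma σ ρ)
      = ((d : ℝ) * σ ^ 4 / (n : ℝ)) *
          Matrix.trace (Sigma * (Sigma - (ρ / (d : ℝ)) • (Xᵀ * X))⁻¹ * (Xᵀ * X)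
            * (Sigma - (ρ / (d : ℝ)) • (Xᵀ * X))⁻¹ * Sigma * Pinv
            * (Xᵀ * X + ((d : ℝ) * σ ^ 2) • 1)⁻¹) := by
  have hd0 : (d : ℝ) ≠ 0 := Nat.cast_ne_zero.mpr hd.ne'
  have hn0 : (n : ℝ) ≠ 0 := Nat.cast_ne_zero.mpr hn.ne'
  simp only [trainErr, Adual, frobSq]
  set G : Matrix (Fin d) (Fin d) ℝ := Xᵀ * X with hGdef
  set c : ℝ := (d : ℝ) * σ ^ 2 with hcdef
  set W : Matrix (Fin d) (Fin d) ℝ := Sigma - (ρ / (d : ℝ)) • G with hWdef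
  set V : Matrix (Fin d) (Fin d) ℝ := G + c • 1 with hVdef
  set B : Matrix (Fin d) (Fin d) ℝ := W⁻¹ with hBdef
  set S : Matrix (Fin d) (Fin d) ℝ := V⁻¹ with hSdef
  set R : Matrix (Fin n) (Fin n) ℝ := (X * Xᵀ)⁻¹ with hRdef
  set P0 : Matrix (Fin d) (Fin d) ℝ := Xᵀ * R * R * X with hP0def
  set Cm : Matrix (Fin d) (Fin d) ℝ :=
    (1 : Matrix (Fin d) (Fin d) ℝ) - (ρ * σ ^ 2) • B with hCmdef
  have hc : 0 < c := by rw [hcdef]; positivity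
  -- basic symmetric / invertibility facts
  have hGsym : Gᵀ = G := by rw [hGdef, Matrix.transpose_mul, Matrix.transpose_transpose]
  have hGps : G.PosSemidef := by
    have := Matrix.posSemidef_conjTranspose_mul_self X
    simpa [Matrix.conjTranspose_eq_transpose_of_trivial] using this
  have hVpd : V.PosDef := by
    rw [hVdef]
    refine Matrix.PosDef.posSemidef_add hGps ?_
    have h1 : (c • (1 : Matrix (Fin d) (Fin d) ℝ)) = Matrix.diagonal (fun _ => c) := by
      rw [Matrix.smul_one_eq_diagonal]
    rw [h1, Matrix.posDef_diagonal_iff]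
    exact fun _ => hc
  have hVdet : IsUnit V.det := hVpd.det_pos.ne'.isUnit
  have hWdet : IsUnit W.det := hpd.det_pos.ne'.isUnit
  have hVS : V * S = 1 := Matrix.mul_nonsing_inv _ hVdet
  have hSV : S * V = 1 := Matrix.nonsing_inv_mul _ hVdet
  have hWB : W * B = 1 := Matrix.mul_nonsing_inv _ hWdet
  have hBW : B * W = 1 := Matrix.nonsing_inv_mul _ hWdet
  have hXXT : (X * Xᵀ) * R = 1 := Matrix.mul_nonsing_inv _ hX
  have hRXXT : R * (X * Xᵀ) = 1 := Matrix.nonsing_inv_mul _ hX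
  have hSigsym : Sigmaᵀ = Sigma := by
    rw [← Matrix.conjTranspose_eq_transpose_of_trivial]; exact hSig.1
  have hWsym : Wᵀ = W := by
    rw [hWdef, Matrix.transpose_sub, Matrix.transpose_smul, hGsym, hSigsym]
  have hVsym : Vᵀ = V := by
    rw [hVdef, Matrix.transpose_add, Matrix.transpose_smul, hGsym, Matrix.transpose_one]
  have hBsym : Bᵀ = B := by rw [hBdef, Matrix.transpose_nonsing_inv, hWsym]
  have hSsym : Sᵀ = S := by rw [hSdef, Matrix.transpose_nonsing_inv, hVsym]
  have hRsym : Rᵀ = R := by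
    rw [hRdef, Matrix.transpose_nonsing_inv, Matrix.transpose_mul, Matrix.transpose_transpose]
  -- commutation facts
  have hGV : G * V = V * G := by
    rw [hVdef]
    simp only [Matrix.mul_add, Matrix.add_mul, Matrix.mul_smul, Matrix.smul_mul,
      Matrix.mul_one, Matrix.one_mul]
  have hGS : G * S = S * G := by
    calc G * S = (S * V) * (G * S) := by rw [hSV, Matrix.one_mul]
      _ = S * (V * G) * S := by simp only [Matrix.mul_assoc]
      _ = S * (G * V) * S := by rw [← hGV]
      _ = (S * G) * (V * S) := by simp only [Matrix.mul_assoc]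
      _ = S * G := by rw [hVS, Matrix.mul_one]
  -- P0 facts
  have hGP0 : G * P0 = Xᵀ * (R * X) := by
    rw [hGdef, hP0def]
    simp only [Matrix.mul_assoc]
    rw [← Matrix.mul_assoc X Xᵀ, ← Matrix.mul_assoc (X * Xᵀ) R, hXXT, Matrix.one_mul]
  have hP0G : P0 * G = Xᵀ * (R * X) := by
    rw [hGdef, hP0def]
    simp only [Matrix.mul_assoc]
    rw [← Matrix.mul_assoc X Xᵀ, ← Matrix.mul_assoc R (X * Xᵀ), hRXXT, Matrix.one_mul]
  have hGP0G : G * P0 * G = G := by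
    rw [hGP0, hGdef]
    simp only [Matrix.mul_assoc]
    rw [← Matrix.mul_assoc X Xᵀ, ← Matrix.mul_assoc R (X * Xᵀ), hRXXT, Matrix.one_mul]
  have hP0GP0 : P0 * G * P0 = P0 := by
    rw [hP0G, hP0def]
    simp only [Matrix.mul_assoc]
    rw [← Matrix.mul_assoc X Xᵀ, ← Matrix.mul_assoc R (X * Xᵀ), hRXXT, Matrix.one_mul]
  have hMP0 : IsMoorePenrose G P0 := by
    refine ⟨hGP0G, hP0GP0, ?_, ?_⟩
    · rw [hGP0, Matrix.transpose_mul, Matrix.transpose_mul, Matrix.transpose_transpose, hRsym,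
        Matrix.mul_assoc]
    · rw [hP0G, Matrix.transpose_mul, Matrix.transpose_mul, Matrix.transpose_transpose, hRsym,
        Matrix.mul_assoc]
  have hPeq : Pinv = P0 := mp_unique hPinv hMP0
  rw [hPeq]
  -- key identity 1 : Cm * S * G = 1 - c • (B * Sigma * S)
  have cancelWV : ∀ E : Matrix (Fin d) (Fin d) ℝ, W * E * V = 0 → E = 0 := by
    intro E hE
    have h : B * (W * E * V) * S = E := by
      calc B * (W * E * V) * S = (B * W) * (E * (V * S)) := by simp only [Matrix.mul_assoc]
        _ = E := by rw [hBW, hVS, Matrix.mul_one, Matrix.one_mul]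
    rw [hE] at h
    simpa using h.symm
  have hkey0 : W * ((Cm * S * G) - 1 + c • (B * Sigma * S)) * V = 0 := by
    have hWC : W * Cm = W - (ρ * σ ^ 2) • 1 := by
      rw [hCmdef, Matrix.mul_sub, Matrix.mul_one, Matrix.mul_smul, hWB]
    have hSGV : S * G * V = G := by
      rw [← hGS, Matrix.mul_assoc, hSV, Matrix.mul_one]
    have h1 : W * (Cm * S * G) * V = W * G - (ρ * σ ^ 2) • G := by
      calc W * (Cm * S * G) * V = (W * Cm) * (S * G * V) := by simp only [Matrix.mul_assoc]
        _ = (W - (ρ * σ ^ 2) • 1) * G := by rw [hWC, hSGV]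
        _ = W * G - (ρ * σ ^ 2) • G := by
            rw [Matrix.sub_mul, Matrix.smul_mul, Matrix.one_mul]
    have h2 : W * (1 : Matrix (Fin d) (Fin d) ℝ) * V = W * G + c • W := by
      rw [Matrix.mul_one, hVdef, Matrix.mul_add, Matrix.mul_smul, Matrix.mul_one]
    have h3 : W * (c • (B * Sigma * S)) * V = c • Sigma := by
      calc W * (c • (B * Sigma * S)) * V = c • ((W * B) * (Sigma * (S * V))) := by
            simp only [Matrix.mul_smul, Matrix.smul_mul, Matrix.mul_assoc]
        _ = c • Sigma := by rw [hWB, hSV, Matrix.one_mul, Matrix.mul_one]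
    have expand : W * ((Cm * S * G) - 1 + c • (B * Sigma * S)) * V
        = W * (Cm * S * G) * V - W * (1 : Matrix (Fin d) (Fin d) ℝ) * V
          + W * (c • (B * Sigma * S)) * V := by
      simp only [Matrix.mul_add, Matrix.add_mul, Matrix.mul_sub, Matrix.sub_mul]
    rw [expand, h1, h2, h3]
    have hsc : c • W = c • Sigma - (ρ * σ ^ 2) • G := by
      rw [hWdef, smul_sub, smul_smul]
      congr 2
      rw [hcdef]
      field_simp
    rw [hsc]
    abel
  have key1 : Cm * S * G = 1 - c • (B * Sigma * S) := by
    have h := cancelWV _ hkey0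
    rw [eq_sub_iff_add_eq, ← sub_eq_zero, ← h]
    abel
  -- the two residual matrices
  have hXAX : X * (Cm * S * Xᵀ) * X - X = (-c) • (X * (B * Sigma * S)) := by
    have h1 : X * (Cm * S * Xᵀ) * X = X * (Cm * S * G) := by
      rw [hGdef]; simp only [Matrix.mul_assoc]
    rw [h1, key1, Matrix.mul_sub, Matrix.mul_one, Matrix.mul_smul, neg_smul]
    abel
  have hXA : X * (Cm * S * Xᵀ) - 1 = (-c) • (X * (B * Sigma * S) * Xᵀ * R) := by
    have h2 : (X * (Cm * S * Xᵀ) - 1) * (X * Xᵀ) = (-c) • (X * (B * Sigma * S) * Xᵀ) := by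
      have e : X * (Cm * S * Xᵀ) * (X * Xᵀ) = (X * (Cm * S * G)) * Xᵀ := by
        rw [hGdef]; simp only [Matrix.mul_assoc]
      rw [Matrix.sub_mul, e, key1, Matrix.one_mul]
      rw [Matrix.mul_sub, Matrix.mul_one, Matrix.mul_smul, Matrix.sub_mul, Matrix.smul_mul,
        neg_smul]
      simp only [Matrix.mul_assoc]
      abel
    calc X * (Cm * S * Xᵀ) - 1 = (X * (Cm * S * Xᵀ) - 1) * ((X * Xᵀ) * R) := by
          rw [hXXT, Matrix.mul_one]
      _ = ((X * (Cm * S * Xᵀ) - 1) * (X * Xᵀ)) * R := by simp only [Matrix.mul_assoc]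
      _ = ((-c) • (X * (B * Sigma * S) * Xᵀ)) * R := by rw [h2]
      _ = (-c) • (X * (B * Sigma * S) * Xᵀ * R) := by rw [Matrix.smul_mul]
  rw [hXAX, hXA]
  -- smul extraction in frobenius terms
  have hsm : ∀ (M : Matrix (Fin n) (Fin d) ℝ),
      Matrix.trace (((-c) • M)ᵀ * ((-c) • M)) = c ^ 2 * Matrix.trace (Mᵀ * M) := by
    intro M
    rw [Matrix.transpose_smul, Matrix.smul_mul, Matrix.mul_smul, smul_smul, Matrix.trace_smul,
      smul_eq_mul]
    ring
  have hsm2 : ∀ (M : Matrix (Fin n) (Fin n) ℝ),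
      Matrix.trace (((-c) • M)ᵀ * ((-c) • M)) = c ^ 2 * Matrix.trace (Mᵀ * M) := by
    intro M
    rw [Matrix.transpose_smul, Matrix.smul_mul, Matrix.mul_smul, smul_smul, Matrix.trace_smul,
      smul_eq_mul]
    ring
  rw [hsm, hsm2]
  -- trace computations
  have t1 : Matrix.trace ((X * (B * Sigma * S))ᵀ * (X * (B * Sigma * S)))
      = Matrix.trace (Sigma * B * G * B * Sigma * (S * S)) := by
    have e1 : (X * (B * Sigma * S))ᵀ * (X * (B * Sigma * S))
        = S * (Sigma * (B * (G * (B * (Sigma * S))))) := by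
      rw [hGdef]
      simp only [Matrix.transpose_mul, hSsym, hBsym, hSigsym, Matrix.mul_assoc]
    rw [e1, Matrix.trace_mul_comm]
    congr 1
    simp only [Matrix.mul_assoc]
  have t2 : Matrix.trace ((X * (B * Sigma * S) * Xᵀ * R)ᵀ * (X * (B * Sigma * S) * Xᵀ * R))
      = Matrix.trace (Sigma * B * G * B * Sigma * (S * (P0 * S))) := by
    have e2 : (X * (B * Sigma * S) * Xᵀ * R)ᵀ * (X * (B * Sigma * S) * Xᵀ * R)
        = R * (X * (S * (Sigma * (B * (G * (B * (Sigma * (S * (Xᵀ * R))))))))) := by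
      rw [hGdef]
      simp only [Matrix.transpose_mul, hSsym, hBsym, hSigsym, hRsym, Matrix.transpose_transpose,
        Matrix.mul_assoc]
    rw [e2, Matrix.trace_mul_comm]
    rw [show X * (S * (Sigma * (B * (G * (B * (Sigma * (S * (Xᵀ * R)))))))) * R
        = X * (S * (Sigma * (B * (G * (B * (Sigma * (S * (Xᵀ * (R * (R * 1)))))))))) by
      simp only [Matrix.mul_assoc, Matrix.mul_one]]
    rw [Matrix.trace_mul_comm]
    rw [show S * (Sigma * (B * (G * (B * (Sigma * (S * (Xᵀ * (R * (R * 1))))))))) * X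
        = S * (Sigma * (B * (G * (B * (Sigma * (S * (Xᵀ * (R * (R * X))))))))) by
      simp only [Matrix.mul_assoc, Matrix.one_mul]]
    rw [Matrix.trace_mul_comm]
    rw [hP0def]
    simp only [Matrix.mul_assoc]
  rw [t1, t2]
  -- key identity 2 : the trace argument collapses
  have hP0VG : P0 * V = V * P0 := by
    rw [hVdef]
    simp only [Matrix.mul_add, Matrix.add_mul, Matrix.mul_smul, Matrix.smul_mul,
      Matrix.mul_one, Matrix.one_mul, hGP0, hP0G]
  have hSP0 : S * P0 = P0 * S := by
    calc S * P0 = (S * P0) * (V * S) := by rw [hVS, Matrix.mul_one]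
      _ = S * (P0 * V) * S := by simp only [Matrix.mul_assoc]
      _ = S * (V * P0) * S := by rw [hP0VG]
      _ = (S * V) * (P0 * S) := by simp only [Matrix.mul_assoc]
      _ = P0 * S := by rw [hSV, Matrix.one_mul]
  have hBSig1 : B * Sigma = 1 + (ρ / (d : ℝ)) • (B * G) := by
    have h := hBW
    rw [hWdef, Matrix.mul_sub, Matrix.mul_smul] at h
    rw [← h]
    abel
  have hQann : Sigma * B * G * B * Sigma * (1 - P0 * G) = 0 := by
    have hGsub : G - G * (P0 * G) = 0 := by
      rw [← Matrix.mul_assoc, hGP0G, sub_self]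
    have hBG0 : B * G * (1 - P0 * G) = 0 := by
      calc B * G * (1 - P0 * G) = B * (G - G * (P0 * G)) := by
            simp only [Matrix.mul_sub, Matrix.mul_one, Matrix.mul_assoc]
        _ = 0 := by rw [hGsub, Matrix.mul_zero]
    have hBSigP : B * Sigma * (1 - P0 * G) = 1 - P0 * G := by
      rw [hBSig1, Matrix.add_mul, Matrix.one_mul, Matrix.smul_mul, hBG0, smul_zero, add_zero]
    calc Sigma * B * G * B * Sigma * (1 - P0 * G)
        = Sigma * (B * G * (B * Sigma * (1 - P0 * G))) := by simp only [Matrix.mul_assoc]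
      _ = Sigma * (B * G * (1 - P0 * G)) := by rw [hBSigP]
      _ = Sigma * 0 := by rw [hBG0]
      _ = 0 := Matrix.mul_zero _
  have hP0S : P0 * S = P0 * (G * (S * S)) + c • (P0 * (S * S)) := by
    have hP0exp : P0 = P0 * (G * S) + c • (P0 * S) := by
      calc P0 = P0 * (V * S) := by rw [hVS, Matrix.mul_one]
        _ = P0 * ((G + c • 1) * S) := by rw [← hVdef]
        _ = P0 * (G * S) + c • (P0 * S) := by
            simp only [Matrix.add_mul, Matrix.smul_mul, Matrix.mul_add, Matrix.mul_smul,
              Matrix.one_mul]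
    calc P0 * S = (P0 * (G * S) + c • (P0 * S)) * S := by rw [← hP0exp]
      _ = P0 * (G * (S * S)) + c • (P0 * (S * S)) := by
          simp only [Matrix.add_mul, Matrix.smul_mul, Matrix.mul_assoc]
  have key2m : Sigma * B * G * B * Sigma * (S * S)
        + c • (Sigma * B * G * B * Sigma * (S * (P0 * S)))
      = Sigma * B * G * B * Sigma * P0 * S := by
    have h1 : S * (P0 * S) = P0 * (S * S) := by
      rw [← Matrix.mul_assoc, hSP0, Matrix.mul_assoc]
    have e : Sigma * B * G * B * Sigma * (S * S)
        = Sigma * B * G * B * Sigma * (P0 * (G * (S * S))) := by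
      have h := congrArg (fun M => M * (S * S)) hQann
      simp only [Matrix.zero_mul] at h
      have h2 : Sigma * B * G * B * Sigma * (S * S)
          - Sigma * B * G * B * Sigma * (P0 * (G * (S * S)))
          = Sigma * B * G * B * Sigma * (1 - P0 * G) * (S * S) := by
        simp only [Matrix.mul_sub, Matrix.sub_mul, Matrix.mul_one, Matrix.one_mul,
          Matrix.mul_assoc]
      exact sub_eq_zero.mp (h2.trans h)
    rw [h1, e]
    calc Sigma * B * G * B * Sigma * (P0 * (G * (S * S)))
          + c • (Sigma * B * G * B * Sigma * (P0 * (S * S)))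
        = Sigma * B * G * B * Sigma * (P0 * (G * (S * S)) + c • (P0 * (S * S))) := by
          simp only [Matrix.mul_add, Matrix.mul_smul]
      _ = Sigma * B * G * B * Sigma * (P0 * S) := by rw [← hP0S]
      _ = Sigma * B * G * B * Sigma * P0 * S := by simp only [Matrix.mul_assoc]
  have hq := congrArg Matrix.trace key2m
  rw [Matrix.trace_add, Matrix.trace_smul, smul_eq_mul] at hq
  rw [← hq]
  rw [hcdef]
  field_simp
end

section
/- In the isotropic case Σ = I, if X has singular values λ_1 ≥ … ≥ λ_n > 0 and 0 ≤ ρ with ρλ_1²/d < 1, then T(A(ρ)) = (1/n) Σ_{i=1}^n σ⁴ / ((1 − ρλ_i²/d)² (λ_i²/d + σ²)). -/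
open Matrix

/-- The dual-optimal linear estimator matrix `A(ρ)` in the isotropic case `Σ = I`. -/
noncomputable def AdualIso (n d : ℕ) (X : Matrix (Fin n) (Fin d) ℝ)
    (σ ρ : ℝ) : Matrix (Fin d) (Fin n) ℝ :=
  ((1 : Matrix (Fin d) (Fin d) ℝ)
      - (ρ * σ ^ 2) • ((1 : Matrix (Fin d) (Fin d) ℝ) - (ρ / (d : ℝ)) • (Xᵀ * X))⁻¹)
    * (Xᵀ * X + ((d : ℝ) * σ ^ 2) • 1)⁻¹ * Xᵀ

/-!
Push-through identities `X (a + b XᵀX)⁻¹ = (a + b XXᵀ)⁻¹ X` move both `d × d` resolvents in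
`A(ρ)` to the `n × n` side, so `X A(ρ) − I` is a function of `XXᵀ = U diag(λ²) Uᵀ`. In that
eigenbasis both Frobenius norms in `T` become sums over the eigenvalues, and `X A(ρ) − I` acts on
the `i`-th one by `−σ² / ((1 − ρλᵢ²/d)(λᵢ²/d + σ²))`.
-/

namespace Matrix

section PushThrough

variable {m n K : Type*} [Fintype m] [Fintype n] [DecidableEq m] [Field K]

theorem det_smul_one_add_smul_mul {a : K} (ha : a ≠ 0) (b : K)
    (A : Matrix m n K) (B : Matrix n m K) :
    (a • 1 + b • (A * B)).det = a ^ Fintype.card m * (1 + A * ((a⁻¹ * b) • B)).det := by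
  rw [← det_smul, Matrix.mul_smul, smul_add, smul_smul, mul_inv_cancel_left₀ ha]

variable [DecidableEq n]

theorem isUnit_det_smul_one_add_smul_mul_comm {a : K} (ha : a ≠ 0) (b : K)
    (A : Matrix m n K) (B : Matrix n m K) :
    IsUnit (a • 1 + b • (A * B)).det ↔ IsUnit (a • 1 + b • (B * A)).det := by
  rw [isUnit_iff_ne_zero, isUnit_iff_ne_zero, det_smul_one_add_smul_mul ha,
    det_smul_one_add_smul_mul ha, det_one_add_mul_comm]
  simp [ha]

theorem mul_inv_smul_one_add_smul_mul_comm {a : K} (ha : a ≠ 0) (b : K)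
    (A : Matrix m n K) (B : Matrix n m K) :
    A * (a • 1 + b • (B * A))⁻¹ = (a • 1 + b • (A * B))⁻¹ * A := by
  set P : Matrix n n K := a • 1 + b • (B * A)
  set Q : Matrix m m K := a • 1 + b • (A * B)
  by_cases hQ : IsUnit Q.det
  · have hP : IsUnit P.det := (isUnit_det_smul_one_add_smul_mul_comm ha b A B).mp hQ
    have hAP : A * P = Q * A := by
      simp only [P, Q, Matrix.mul_add, Matrix.add_mul, Matrix.mul_smul, Matrix.smul_mul,
        Matrix.mul_one, Matrix.one_mul, Matrix.mul_assoc]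
    calc A * P⁻¹ = Q⁻¹ * (Q * A) * P⁻¹ := by rw [nonsing_inv_mul_cancel_left _ _ hQ]
      _ = Q⁻¹ * A := by rw [← hAP, ← Matrix.mul_assoc, mul_nonsing_inv_cancel_right _ _ hP]
  · have hP : ¬IsUnit P.det := mt (isUnit_det_smul_one_add_smul_mul_comm ha b A B).mpr hQ
    rw [nonsing_inv_apply_not_isUnit _ hP, nonsing_inv_apply_not_isUnit _ hQ,
      Matrix.mul_zero, Matrix.zero_mul]

theorem inv_map_eq_map_inv {ι F : Type*} [FunLike F (ι → K) (Matrix n n K)]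
    [MonoidHomClass F (ι → K) (Matrix n n K)] (φ : F) {h : ι → K} (hh : ∀ i, h i ≠ 0) :
    (φ h)⁻¹ = φ h⁻¹ := by
  refine inv_eq_right_inv ?_
  rw [← map_mul, show h * h⁻¹ = 1 from funext fun i => mul_inv_cancel₀ (hh i), map_one]

end PushThrough

section UnitaryConjDiag

variable {ι R : Type*} [Fintype ι] [DecidableEq ι] [CommRing R] [StarRing R]

noncomputable def unitaryConjDiag (u : unitary (Matrix ι ι R)) : (ι → R) →ₐ[R] Matrix ι ι R :=
  (Unitary.conjStarAlgAut R _ u).toAlgEquiv.toAlgHom.comp (diagonalAlgHom R)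

theorem unitaryConjDiag_apply (u : unitary (Matrix ι ι R)) (h : ι → R) :
    unitaryConjDiag u h = u * diagonal h * star (u : Matrix ι ι R) := rfl

theorem trace_unitaryConjDiag (u : unitary (Matrix ι ι R)) (h : ι → R) :
    trace (unitaryConjDiag u h) = ∑ i, h i := by
  rw [unitaryConjDiag_apply, trace_mul_comm, ← Matrix.mul_assoc, Unitary.coe_star_mul_self,
    Matrix.one_mul, trace_diagonal]

theorem transpose_unitaryConjDiag [TrivialStar R] (u : unitary (Matrix ι ι R)) (h : ι → R) :
    (unitaryConjDiag u h)ᵀ = unitaryConjDiag u h := by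
  simp [unitaryConjDiag_apply, star_eq_conjTranspose, conjTranspose_eq_transpose_of_trivial,
    Matrix.mul_assoc]

end UnitaryConjDiag

end Matrix

theorem frobSq_unitaryConjDiag {n : ℕ} (u : unitary (Matrix (Fin n) (Fin n) ℝ)) (g : Fin n → ℝ) :
    frobSq (unitaryConjDiag u g) = ∑ i, g i ^ 2 := by
  rw [frobSq, transpose_unitaryConjDiag, ← map_mul, trace_unitaryConjDiag]
  simp [sq]

theorem frobSq_unitaryConjDiag_mul {n k : ℕ} (u : unitary (Matrix (Fin n) (Fin n) ℝ))
    (g μ : Fin n → ℝ) (X : Matrix (Fin n) (Fin k) ℝ) (hX : X * Xᵀ = unitaryConjDiag u μ) :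
    frobSq (unitaryConjDiag u g * X) = ∑ i, g i ^ 2 * μ i := by
  rw [frobSq, transpose_mul, transpose_unitaryConjDiag, Matrix.mul_assoc, trace_mul_comm,
    Matrix.mul_assoc, Matrix.mul_assoc, hX, ← map_mul, ← map_mul, trace_unitaryConjDiag]
  simp [sq, mul_assoc]

theorem mul_adualIso {n d : ℕ} (X : Matrix (Fin n) (Fin d) ℝ) (σ ρ : ℝ)
    (ht : (d : ℝ) * σ ^ 2 ≠ 0) (φ : (Fin n → ℝ) →ₐ[ℝ] Matrix (Fin n) (Fin n) ℝ)
    (μ : Fin n → ℝ) (hX : X * Xᵀ = φ μ) (hm : ∀ i, 1 - ρ / d * μ i ≠ 0)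
    (hν : ∀ i, μ i + d * σ ^ 2 ≠ 0) :
    X * AdualIso n d X σ ρ =
      φ fun i => (1 - ρ * σ ^ 2 / (1 - ρ / d * μ i)) * (μ i / (μ i + d * σ ^ 2)) := by
  have hM : X * (1 - (ρ / d) • (Xᵀ * X))⁻¹ = (1 - (ρ / d) • (X * Xᵀ))⁻¹ * X := by
    simpa [sub_eq_add_neg] using mul_inv_smul_one_add_smul_mul_comm one_ne_zero (-(ρ / d)) X Xᵀ
  have hN : (Xᵀ * X + ((d : ℝ) * σ ^ 2) • 1)⁻¹ * Xᵀ = Xᵀ * (X * Xᵀ + ((d : ℝ) * σ ^ 2) • 1)⁻¹ := by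
    simpa [add_comm] using (mul_inv_smul_one_add_smul_mul_comm ht 1 Xᵀ X).symm
  have hMφ : 1 - (ρ / d) • φ μ = φ (fun i => 1 - ρ / d * μ i) := by
    rw [show (fun i => 1 - ρ / d * μ i) = 1 - (ρ / d) • μ from rfl, map_sub, map_one, map_smul]
  have hNφ : φ μ + ((d : ℝ) * σ ^ 2) • 1 = φ (fun i => μ i + d * σ ^ 2) := by
    rw [show (fun i => μ i + d * σ ^ 2) = μ + ((d : ℝ) * σ ^ 2) • 1 from
      funext fun i => by simp, map_add, map_smul, map_one]
  calc X * AdualIso n d X σ ρ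
      = (X - (ρ * σ ^ 2) • (X * (1 - (ρ / d) • (Xᵀ * X))⁻¹))
          * ((Xᵀ * X + ((d : ℝ) * σ ^ 2) • 1)⁻¹ * Xᵀ) := by
        simp only [AdualIso, Matrix.mul_sub, Matrix.sub_mul, Matrix.one_mul, Matrix.mul_smul,
          Matrix.smul_mul, Matrix.mul_assoc]
    _ = (1 - (ρ * σ ^ 2) • (1 - (ρ / d) • (X * Xᵀ))⁻¹) * (X * Xᵀ)
          * (X * Xᵀ + ((d : ℝ) * σ ^ 2) • 1)⁻¹ := by
        rw [hM, hN]
        simp only [Matrix.sub_mul, Matrix.one_mul, Matrix.smul_mul, Matrix.mul_assoc]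
    _ = _ := by
        rw [hX, hMφ, hNφ, inv_map_eq_map_inv φ hm, inv_map_eq_map_inv φ hν, ← map_one φ,
          ← map_smul, ← map_sub, ← map_mul, ← map_mul]
        congr 1
        funext i
        simp [div_eq_mul_inv, mul_assoc]

theorem stmt7_general (n d : ℕ) (hn : 0 < n) (hd : 0 < d)
    (X : Matrix (Fin n) (Fin d) ℝ)
    (σ ρ : ℝ) (hσ : 0 < σ) (hρ : 0 ≤ ρ)
    (l : Fin n → ℝ) (hlpos : ∀ i, 0 < l i) (hlmono : Antitone l)
    (U : Matrix (Fin n) (Fin n) ℝ) (hU : U * Uᵀ = 1 ∧ Uᵀ * U = 1)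
    (hsvd : X * Xᵀ = U * Matrix.diagonal (fun i => (l i) ^ 2) * Uᵀ)
    (hedge : ρ * (l ⟨0, hn⟩) ^ 2 / (d : ℝ) < 1) :
    trainErr n d X σ (AdualIso n d X σ ρ)
      = (1 / (n : ℝ)) * ∑ i, σ ^ 4 /
          ((1 - ρ * (l i) ^ 2 / (d : ℝ)) ^ 2 * ((l i) ^ 2 / (d : ℝ) + σ ^ 2)) := by
  have hd' : (0 : ℝ) < d := Nat.cast_pos.mpr hd
  let u : unitary (Matrix (Fin n) (Fin n) ℝ) :=
    ⟨U, by simpa [mem_unitaryGroup_iff, star_eq_conjTranspose] using hU.1⟩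
  have hX : X * Xᵀ = unitaryConjDiag u (fun i => l i ^ 2) := hsvd
  have hm : ∀ i, 0 < 1 - ρ * l i ^ 2 / d := fun i => by
    have hli : l i ^ 2 ≤ l ⟨0, hn⟩ ^ 2 :=
      pow_le_pow_left₀ (hlpos i).le (hlmono (Fin.mk_le_mk.mpr (Nat.zero_le i))) 2
    have : ρ * l i ^ 2 / d ≤ ρ * l ⟨0, hn⟩ ^ 2 / d := by gcongr
    linarith
  set g : Fin n → ℝ := fun i =>
    (1 - ρ * σ ^ 2 / (1 - ρ / d * l i ^ 2)) * (l i ^ 2 / (l i ^ 2 + d * σ ^ 2)) - 1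
  have hXA : X * AdualIso n d X σ ρ - 1 = unitaryConjDiag u g := by
    rw [mul_adualIso X σ ρ (by positivity) _ _ hX
      (fun i => by rw [div_mul_eq_mul_div]; exact (hm i).ne') (fun i => by positivity),
      ← map_one (unitaryConjDiag u), ← map_sub]
    rfl
  have hXAX : X * AdualIso n d X σ ρ * X - X = unitaryConjDiag u g * X := by
    rw [← hXA, Matrix.sub_mul, Matrix.one_mul]
  rw [trainErr, hXAX, hXA, frobSq_unitaryConjDiag_mul u g _ X hX, frobSq_unitaryConjDiag,
    Finset.mul_sum, Finset.mul_sum, Finset.mul_sum, ← Finset.sum_add_distrib]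
  refine Finset.sum_congr rfl fun i _ => ?_
  have hmi : (d : ℝ) - ρ * l i ^ 2 ≠ 0 := by
    rw [show (d : ℝ) - ρ * l i ^ 2 = d * (1 - ρ * l i ^ 2 / d) by field_simp]
    exact mul_ne_zero hd'.ne' (hm i).ne'
  simp only [g]
  field_simp
  ring

/-- In the isotropic case, with singular values `λ₁ ≥ … ≥ λₙ > 0` of `X` and
`ρ λ₁²/d < 1`, `T(A(ρ)) = (1/n) ∑ᵢ σ⁴ / ((1 − ρλᵢ²/d)² (λᵢ²/d + σ²))`. -/
theorem stmt7 (n d : ℕ) (hn : 0 < n) (hnd : n ≤ d) (hd : 0 < d)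
    (X : Matrix (Fin n) (Fin d) ℝ)
    (σ ρ : ℝ) (hσ : 0 < σ) (hρ : 0 ≤ ρ)
    (l : Fin n → ℝ) (hlpos : ∀ i, 0 < l i) (hlmono : Antitone l)
    (U : Matrix (Fin n) (Fin n) ℝ) (hU : U * Uᵀ = 1 ∧ Uᵀ * U = 1)
    (hsvd : X * Xᵀ = U * Matrix.diagonal (fun i => (l i) ^ 2) * Uᵀ)
    (hedge : ρ * (l ⟨0, hn⟩) ^ 2 / (d : ℝ) < 1) :
    trainErr n d X σ (AdualIso n d X σ ρ)
      = (1 / (n : ℝ)) * ∑ i, σ ^ 4 /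
          ((1 - ρ * (l i) ^ 2 / (d : ℝ)) ^ 2 * ((l i) ^ 2 / (d : ℝ) + σ ^ 2)) :=
  stmt7_general n d hn hd X σ ρ hσ hρ l hlpos hlmono U hU hsvd hedge
end

section
/- Let H be the Marchenko–Pastur law with aspect ratio γ > 1, i.e. dH(s) = (γ/(2π))·√((λ₊ − s)(s − λ₋))/s ds on [λ₋, λ₊] with λ± = (1 ± 1/√γ)². Then for every σ > 0, ∫ 1/(s + σ²) dH(s) = (1 − 1/γ + σ² − √((1 − 1/γ + σ²)² + 4σ²/γ)) / (−2σ²/γ). -/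
open MeasureTheory Real Filter
open scoped ENNReal NNReal


lemma aux_inv_integral {p q : ℝ} (hq : 0 < q) (hpq : q < p) :
    ∫ θ in (-(π/2))..(π/2), 1 / (p + q * Real.sin θ)
      = π / Real.sqrt (p^2 - q^2) := by
  have hp : 0 < p := hq.trans hpq
  set s := Real.sqrt (p^2 - q^2) with hs_def
  have hsq : s ^ 2 = p^2 - q^2 := Real.sq_sqrt (by nlinarith)
  have hs : 0 < s := Real.sqrt_pos.mpr (by nlinarith)
  set A : ℝ → ℝ := fun θ => 2 / s * Real.arctan ((p * Real.tan (θ/2) + q) / s) with hA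
  have hpos : ∀ θ : ℝ, 0 < p + q * Real.sin θ := by
    intro θ
    nlinarith [Real.neg_one_le_sin θ, Real.sin_le_one θ]
  have key : ∀ θ ∈ Set.uIcc (-(π/2)) (π/2), HasDerivAt A (1 / (p + q * Real.sin θ)) θ := by
    intro θ hθ
    rw [Set.uIcc_of_le (by linarith [Real.pi_pos])] at hθ
    have hθ2 : θ/2 ∈ Set.Ioo (-(π/2)) (π/2) := by
      constructor
      · nlinarith [hθ.1, Real.pi_pos]
      · nlinarith [hθ.2, Real.pi_pos]
    have hc : 0 < Real.cos (θ/2) := Real.cos_pos_of_mem_Ioo hθ2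
    have htan : HasDerivAt (fun x => Real.tan (x/2)) (1 / Real.cos (θ/2)^2 * (1/2)) θ := by
      exact (Real.hasDerivAt_tan hc.ne').comp θ ((hasDerivAt_id θ).div_const 2)
    have hu : HasDerivAt (fun x => (p * Real.tan (x/2) + q) / s)
        ((p * (1 / Real.cos (θ/2)^2 * (1/2))) / s) θ :=
      (((htan.const_mul p).add_const q).div_const s)
    have harc := (Real.hasDerivAt_arctan ((p * Real.tan (θ/2) + q) / s)).comp θ hu
    have hAd := harc.const_mul (2/s)
    refine hAd.congr_deriv (Eq.symm ?_)
    have hz := Real.sin_sq_add_cos_sq (θ/2)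
    have hsin : Real.sin θ = 2 * Real.sin (θ/2) * Real.cos (θ/2) := by
      have h := Real.sin_two_mul (θ/2)
      rw [show 2 * (θ/2) = θ by ring] at h
      linarith
    rw [Real.tan_eq_sin_div_cos, hsin]
    have h1 : (0:ℝ) < 1 + ((p * (Real.sin (θ/2) / Real.cos (θ/2)) + q) / s)^2 := by positivity
    have hne1 := (hpos θ).ne'
    rw [hsin] at hne1
    field_simp
    rw [div_eq_iff (by convert hne1 using 1; ring)]
    linear_combination (Real.cos (θ/2)^2) * hsq + p^2 * hz
  have hint : IntervalIntegrable (fun θ => 1 / (p + q * Real.sin θ)) volume (-(π/2)) (π/2) := by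
    apply Continuous.intervalIntegrable
    exact continuous_const.div (by continuity) (fun θ => (hpos θ).ne')
  rw [intervalIntegral.integral_eq_sub_of_hasDerivAt key hint]
  have ht1 : Real.tan (π/2/2) = 1 := by
    rw [show π/2/2 = π/4 by ring, Real.tan_pi_div_four]
  have ht2 : Real.tan (-(π/2)/2) = -1 := by
    rw [show -(π/2)/2 = -(π/4) by ring, Real.tan_neg, Real.tan_pi_div_four]
  rw [hA]
  simp only [ht1, ht2]
  have hinv : Real.arctan ((p * (-1) + q)/s) = -(π/2 - Real.arctan ((p+q)/s)) := by
    have hx : (0:ℝ) < (p+q)/s := by positivity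
    have : ((p+q)/s)⁻¹ = (p - q)/s := by
      rw [inv_div]
      rw [div_eq_div_iff (by positivity) hs.ne']
      nlinarith
    have h2 := Real.arctan_inv_of_pos hx
    rw [this] at h2
    rw [show (p * (-1) + q)/s = -((p-q)/s) by ring, Real.arctan_neg, h2]
  rw [hinv]
  field_simp
  ring

lemma aux_cos_sq_integral {p q : ℝ} (hq : 0 < q) (hpq : q < p)
    (h1 : ∫ θ in (-(π/2))..(π/2), 1 / (p + q * Real.sin θ)
      = π / Real.sqrt (p^2 - q^2)) :
    ∫ θ in (-(π/2))..(π/2), q^2 * Real.cos θ^2 / (p + q * Real.sin θ)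
      = π * (p - Real.sqrt (p^2 - q^2)) := by
  have hp : 0 < p := hq.trans hpq
  set s := Real.sqrt (p^2 - q^2) with hs_def
  have hsq : s ^ 2 = p^2 - q^2 := Real.sq_sqrt (by nlinarith)
  have hs : 0 < s := Real.sqrt_pos.mpr (by nlinarith)
  have hpos : ∀ θ : ℝ, 0 < p + q * Real.sin θ := by
    intro θ
    nlinarith [Real.neg_one_le_sin θ, Real.sin_le_one θ]
  have hcont : Continuous (fun θ => 1 / (p + q * Real.sin θ)) :=
    continuous_const.div (by continuity) (fun θ => (hpos θ).ne')
  have heq : ∀ θ : ℝ, q^2 * Real.cos θ^2 / (p + q * Real.sin θ)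
      = (p - q * Real.sin θ) - (p^2 - q^2) * (1 / (p + q * Real.sin θ)) := by
    intro θ
    have h := (hpos θ).ne'
    have hz := Real.sin_sq_add_cos_sq θ
    field_simp
    nlinarith [hz]
  simp only [heq]
  rw [intervalIntegral.integral_sub (by apply Continuous.intervalIntegrable; continuity)
    ((hcont.intervalIntegrable _ _).const_mul _)]
  rw [intervalIntegral.integral_const_mul, h1]
  have h2 : ∫ θ in (-(π/2))..(π/2), (p - q * Real.sin θ) = p * π := by
    rw [intervalIntegral.integral_sub intervalIntegrable_const
      ((Real.continuous_sin.intervalIntegrable _ _).const_mul q),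
      intervalIntegral.integral_const_mul, integral_sin,
      intervalIntegral.integral_const]
    simp [Real.cos_pi_div_two, Real.cos_neg]
    ring
  rw [h2]
  field_simp
  linear_combination hsq

lemma aux_sqrt_integral {a b c : ℝ} (ha : 0 < a) (hab : a < b) (hc : 0 ≤ c) :
    ∫ x in a..b, Real.sqrt ((b - x) * (x - a)) / (x + c)
      = π * (c + (a+b)/2 - Real.sqrt ((a+c)*(b+c))) := by
  set m : ℝ := (a+b)/2 with hm
  set q : ℝ := (b-a)/2 with hq_def
  set p : ℝ := m + c with hp_def
  have hq : 0 < q := by simp [hq_def]; linarith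
  have hpq : q < p := by simp [hp_def, hq_def, hm]; linarith
  set φ : ℝ → ℝ := fun θ => m + q * Real.sin θ with hφ
  set g : ℝ → ℝ := fun x => Real.sqrt ((b - x) * (x - a)) / (x + c) with hg
  have hmono : ∀ θ : ℝ, φ θ ∈ Set.Icc a b := by
    intro θ
    constructor
    · have := Real.neg_one_le_sin θ
      simp only [hφ, hm, hq_def]
      nlinarith
    · have := Real.sin_le_one θ
      simp only [hφ, hm, hq_def]
      nlinarith
  have hd : ∀ θ ∈ Set.uIcc (-(π/2)) (π/2), HasDerivAt φ (q * Real.cos θ) θ := by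
    intro θ _
    exact ((Real.hasDerivAt_sin θ).const_mul q).const_add m
  have himg : φ '' Set.uIcc (-(π/2)) (π/2) ⊆ Set.Icc a b := by
    rintro y ⟨θ, _, rfl⟩; exact hmono θ
  have hgc : ContinuousOn g (φ '' Set.uIcc (-(π/2)) (π/2)) := by
    refine ContinuousOn.mono ?_ himg
    apply ContinuousOn.div
    · exact (Real.continuous_sqrt.comp (by continuity)).continuousOn
    · exact (continuous_id.add continuous_const).continuousOn
    · intro x hx
      have : 0 < x + c := by linarith [hx.1]
      exact this.ne'
  have hsub := intervalIntegral.integral_comp_smul_deriv' hd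
    ((continuous_const.mul Real.continuous_cos).continuousOn) hgc
  have hφa : φ (-(π/2)) = a := by
    simp [hφ, Real.sin_neg, Real.sin_pi_div_two, hm, hq_def]; ring
  have hφb : φ (π/2) = b := by
    simp [hφ, Real.sin_pi_div_two, hm, hq_def]; ring
  rw [hφa, hφb] at hsub
  rw [← hsub]
  have hcong : ∀ θ ∈ Set.uIcc (-(π/2)) (π/2),
      (q * Real.cos θ) • (g ∘ φ) θ = q^2 * Real.cos θ^2 / (p + q * Real.sin θ) := by
    intro θ hθ
    rw [Set.uIcc_of_le (by linarith [Real.pi_pos])] at hθ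
    have hcos : 0 ≤ Real.cos θ := Real.cos_nonneg_of_mem_Icc hθ
    have hprod : (b - φ θ) * (φ θ - a) = (q * Real.cos θ)^2 := by
      have hz := Real.sin_sq_add_cos_sq θ
      simp only [hφ, hm, hq_def]
      linear_combination (-(((b-a)/2)^2)) * hz
    have hsqrt : Real.sqrt ((b - φ θ) * (φ θ - a)) = q * Real.cos θ := by
      rw [hprod, Real.sqrt_sq (by positivity)]
    simp only [Function.comp_apply, hg, smul_eq_mul, hsqrt]
    have : φ θ + c = p + q * Real.sin θ := by simp [hφ, hp_def]; ring
    rw [this]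
    ring
  rw [intervalIntegral.integral_congr hcong]
  rw [aux_cos_sq_integral hq hpq (aux_inv_integral hq hpq)]
  have : p^2 - q^2 = (a+c)*(b+c) := by simp only [hp_def, hq_def, hm]; ring
  rw [this]
  have : p = c + (a+b)/2 := by simp [hp_def, hm]; ring
  rw [this]

/-- Lower edge `λ₋ = (1 − 1/√γ)²` of the Marchenko–Pastur law. -/
noncomputable def lamM (γ : ℝ) : ℝ := (1 - 1 / Real.sqrt γ) ^ 2

/-- Upper edge `λ₊ = (1 + 1/√γ)²` of the Marchenko–Pastur law. -/
noncomputable def lamP (γ : ℝ) : ℝ := (1 + 1 / Real.sqrt γ) ^ 2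

/-- The Marchenko–Pastur law with aspect ratio `γ > 1`:
`dH(s) = (γ/(2π))·√((λ₊ − s)(s − λ₋))/s · 𝟙_{[λ₋,λ₊]}(s) ds`. -/
noncomputable def MPlaw (γ : ℝ) : Measure ℝ :=
  MeasureTheory.volume.withDensity fun s =>
    ENNReal.ofReal (if lamM γ ≤ s ∧ s ≤ lamP γ then
      γ / (2 * Real.pi) * Real.sqrt ((lamP γ - s) * (s - lamM γ)) / s else 0)

set_option maxHeartbeats 1000000 in
/-- Stieltjes-transform identity for the Marchenko–Pastur law:
`∫ 1/(s + σ²) dH(s) = (1 − 1/γ + σ² − √((1 − 1/γ + σ²)² + 4σ²/γ)) / (−2σ²/γ)`. -/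
theorem stmt9 (γ σ : ℝ) (hγ : 1 < γ) (hσ : 0 < σ) :
    ∫ s, 1 / (s + σ ^ 2) ∂(MPlaw γ)
      = (1 - 1 / γ + σ ^ 2 - Real.sqrt ((1 - 1 / γ + σ ^ 2) ^ 2 + 4 * σ ^ 2 / γ))
          / (-(2 * σ ^ 2 / γ)) := by
  have hγ0 : (0:ℝ) < γ := by linarith
  have hsg : 1 < Real.sqrt γ := by
    have h := Real.sqrt_lt_sqrt zero_le_one hγ
    simpa using h
  set t : ℝ := 1 / Real.sqrt γ with ht_def
  have ht0 : 0 < t := by positivity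
  have ht1 : t < 1 := by
    rw [ht_def, div_lt_one (by linarith)]; exact hsg
  have ht2 : t ^ 2 = 1 / γ := by
    rw [ht_def, div_pow, one_pow, Real.sq_sqrt hγ0.le]
  set a : ℝ := lamM γ with ha_def
  set b : ℝ := lamP γ with hb_def
  have haf : a = (1 - t) ^ 2 := rfl
  have hbf : b = (1 + t) ^ 2 := rfl
  have ha : 0 < a := by rw [haf]; exact pow_pos (by linarith) 2
  have hab : a < b := by rw [haf, hbf]; nlinarith
  set D : ℝ → ℝ := fun s => if a ≤ s ∧ s ≤ b then
      γ / (2 * Real.pi) * Real.sqrt ((b - s) * (s - a)) / s else 0 with hD_def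
  have hπ := Real.pi_pos
  set f : ℝ → ℝ := fun s => γ / (2 * Real.pi) * Real.sqrt ((b - s) * (s - a)) / s with hf_def
  have hDind : D = (Set.Icc a b).indicator f := by
    funext s
    by_cases h : a ≤ s ∧ s ≤ b <;>
      simp [hD_def, Set.indicator, Set.mem_Icc, h, hf_def]
  have hfmeas : Measurable f := by
    apply Measurable.div
    · exact (continuous_const.mul (Real.continuous_sqrt.comp ((continuous_const.sub continuous_id).mul (continuous_id.sub continuous_const)))).measurable
    · exact measurable_id
  have hDmeas : Measurable D := by
    rw [hDind]; exact hfmeas.indicator measurableSet_Icc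
  have hD0 : ∀ s, 0 ≤ D s := by
    intro s
    rw [hD_def]
    by_cases h : a ≤ s ∧ s ≤ b
    · simp only [h, if_true]
      have hs0 : 0 < s := lt_of_lt_of_le ha h.1
      positivity
    · simp [h]
  -- unfold the withDensity integral
  have hstep1 : ∫ s, 1 / (s + σ ^ 2) ∂(MPlaw γ)
      = ∫ s, D s * (1 / (s + σ ^ 2)) := by
    have : MPlaw γ = volume.withDensity fun s => ((D s).toNNReal : ℝ≥0∞) := rfl
    rw [this, integral_withDensity_eq_integral_smul hDmeas.real_toNNReal]
    congr 1
    funext s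
    rw [NNReal.smul_def, smul_eq_mul, Real.coe_toNNReal _ (hD0 s)]
  rw [hstep1]
  have hstep2 : ∫ s, D s * (1 / (s + σ ^ 2))
      = ∫ s in a..b, f s * (1 / (s + σ ^ 2)) := by
    rw [intervalIntegral.integral_of_le hab.le, ← integral_Icc_eq_integral_Ioc,
      ← integral_indicator measurableSet_Icc]
    congr 1
    funext s
    rw [hDind]
    by_cases h : s ∈ Set.Icc a b <;> simp [h]
  rw [hstep2]
  -- partial fractions
  have hσ2 : (0:ℝ) < σ ^ 2 := by positivity
  have hcong : ∀ s ∈ Set.uIcc a b, f s * (1 / (s + σ ^ 2))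
      = γ / (2 * Real.pi * σ ^ 2) *
        (Real.sqrt ((b - s) * (s - a)) / (s + 0)
          - Real.sqrt ((b - s) * (s - a)) / (s + σ ^ 2)) := by
    intro s hs
    rw [Set.uIcc_of_le hab.le] at hs
    have hs0 : 0 < s := lt_of_lt_of_le ha hs.1
    have hsσ : 0 < s + σ ^ 2 := by positivity
    rw [hf_def]
    field_simp
    ring
  rw [intervalIntegral.integral_congr hcong]
  have hcont : ∀ c : ℝ, 0 ≤ c → IntervalIntegrable
      (fun s => Real.sqrt ((b - s) * (s - a)) / (s + c)) volume a b := by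
    intro c hc
    apply ContinuousOn.intervalIntegrable
    rw [Set.uIcc_of_le hab.le]
    apply ContinuousOn.div
    · exact (Real.continuous_sqrt.comp ((continuous_const.sub continuous_id).mul (continuous_id.sub continuous_const))).continuousOn
    · exact (continuous_id.add continuous_const).continuousOn
    · intro x hx
      have : 0 < x + c := by linarith [hx.1, ha]
      exact this.ne'
  rw [intervalIntegral.integral_const_mul,
    intervalIntegral.integral_sub
      (by simpa using hcont 0 le_rfl) (hcont (σ ^ 2) hσ2.le)]
  have hJ0 := aux_sqrt_integral ha hab (le_refl 0)
  have hJσ := aux_sqrt_integral ha hab hσ2.le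
  rw [hJ0, hJσ]
  -- final algebra
  have habsum : a + b = 2 * (1 + 1 / γ) := by
    rw [haf, hbf, ← ht2]; ring
  have hval0 : Real.sqrt ((a + 0) * (b + 0)) = 1 - 1 / γ := by
    have : (a + 0) * (b + 0) = (1 - 1 / γ) ^ 2 := by
      rw [haf, hbf, ← ht2]; ring
    rw [this, Real.sqrt_sq (by nlinarith [one_div_pos.mpr hγ0, (div_lt_one hγ0).mpr hγ])]
  have hvalσ : Real.sqrt ((a + σ ^ 2) * (b + σ ^ 2))
      = Real.sqrt ((1 - 1 / γ + σ ^ 2) ^ 2 + 4 * σ ^ 2 / γ) := by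
    congr 1
    have h4 : 4 * σ ^ 2 / γ = 4 * σ ^ 2 * t ^ 2 := by rw [ht2]; ring
    rw [haf, hbf, h4, ← ht2]
    ring
  rw [hval0, hvalσ]
  set S := Real.sqrt ((1 - 1 / γ + σ ^ 2) ^ 2 + 4 * σ ^ 2 / γ)
  rw [habsum]
  field_simp
  ring
end

section
/- For the Marchenko–Pastur law H with γ > 1 and σ > 0, the function ρ ↦ ∫ σ⁴/((1 − ρs)²(s + σ²)) dH(s) is continuous and strictly increasing on [0, 1/λ₊), equals ε_σ² = ∫ σ⁴/(s+σ²) dH(s) at ρ = 0, and tends to +∞ as ρ ↑ 1/λ₊. Consequently, for every ε² ≥ ε_σ², there exists a unique ρ(ε) ∈ [0, 1/λ₊) solving ∫ σ⁴/((1 − ρs)²(s + σ²)) dH(s) = ε². -/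
/-!
For `0 ≤ ρ < 1/λ₊` the integrand is bounded on the support `[λ₋, λ₊]` of `H`, continuous and
strictly increasing in `ρ`, so continuity and strict monotonicity follow from dominated
convergence and positivity of `H`. For the blow-up, write `ρ = 1/(λ₊ + t)`: on the window
`[λ₊ - 2t, λ₊ - t]` the integrand is of order `t⁻²`, while the square-root edge of the density
gives the window `H`-mass of order `t^{3/2}`, so the integral is at least of order `t^{-1/2}`.
The solution `ρ(ε)` then exists by the intermediate value theorem and is unique by monotonicity.
-/

open MeasureTheory Real Filter

open Set Topology

theorem StrictMonoOn.existsUnique_eq_of_tendsto_atTop {α δ : Type*}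
    [ConditionallyCompleteLinearOrder α] [TopologicalSpace α] [OrderTopology α] [DenselyOrdered α]
    [LinearOrder δ] [TopologicalSpace δ] [OrderClosedTopology δ] {f : α → δ} {a b : α} (hab : a < b)
    (hmono : StrictMonoOn f (Ico a b)) (hcont : ContinuousOn f (Ico a b))
    (htend : Tendsto f (𝓝[<] b) atTop) {y : δ} (hy : f a ≤ y) :
    ∃! x, x ∈ Ico a b ∧ f x = y := by
  have : (𝓝[<] b).NeBot := nhdsLT_neBot_of_exists_lt ⟨a, hab⟩
  obtain ⟨x, hx, hfx⟩ := isPreconnected_Ico.intermediate_value₂_eventually₁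
    (left_mem_Ico.2 hab) (le_principal_iff.2 (Ico_mem_nhdsLT hab)) hcont continuousOn_const hy
    (htend.eventually_ge_atTop y)
  exact ⟨x, ⟨hx, hfx⟩, fun x' hx' => hmono.injOn hx'.1 hx (hx'.2.trans hfx.symm)⟩

noncomputable def mpKernel (σ ρ s : ℝ) : ℝ := σ ^ 4 / ((1 - ρ * s) ^ 2 * (s + σ ^ 2))

section Kernel

variable {σ ρ ρ₁ ρ₂ s b t : ℝ}

lemma mul_lt_one_of_mem_Ico (hρ : ρ ∈ Ico 0 (1 / b)) : ρ * b < 1 := by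
  have hb : 0 < b := one_div_pos.1 (hρ.1.trans_lt hρ.2)
  exact (lt_div_iff₀ hb).1 hρ.2

lemma measurable_mpKernel : Measurable (mpKernel σ ρ) := by
  unfold mpKernel; fun_prop

lemma mpKernel_nonneg (hs : 0 ≤ s) : 0 ≤ mpKernel σ ρ s := by
  unfold mpKernel; positivity

lemma mpKernel_le (hρ : ρ ≤ ρ₁) (hρ₁ : 0 ≤ ρ₁) (hρ₁b : ρ₁ * b < 1) (hs : s ∈ Icc 0 b) :
    mpKernel σ ρ s ≤ σ ^ 2 / (1 - ρ₁ * b) ^ 2 := by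
  rcases eq_or_ne σ 0 with rfl | hσ
  · simp [mpKernel]
  obtain ⟨hs₀, hsb⟩ := hs
  have hρs : 1 - ρ₁ * b ≤ 1 - ρ * s := by
    nlinarith [mul_le_mul_of_nonneg_right hρ hs₀, mul_le_mul_of_nonneg_left hsb hρ₁]
  calc mpKernel σ ρ s ≤ σ ^ 4 / ((1 - ρ₁ * b) ^ 2 * σ ^ 2) := by
        unfold mpKernel
        gcongr
        nlinarith
    _ = σ ^ 2 / (1 - ρ₁ * b) ^ 2 := by field_simp

lemma mpKernel_lt_mpKernel (hσ : σ ≠ 0) (hs : 0 < s) (h : ρ₁ < ρ₂)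
    (hρ₂ : ρ₂ * s < 1) : mpKernel σ ρ₁ s < mpKernel σ ρ₂ s := by
  have hlt : ρ₁ * s < ρ₂ * s := mul_lt_mul_of_pos_right h hs
  unfold mpKernel
  gcongr

lemma continuousAt_mpKernel (hρs : ρ * s ≠ 1) (hs : s + σ ^ 2 ≠ 0) :
    ContinuousAt (fun ρ => mpKernel σ ρ s) ρ := by
  have : (1 - ρ * s) ^ 2 * (s + σ ^ 2) ≠ 0 :=
    mul_ne_zero (pow_ne_zero _ (sub_ne_zero.2 hρs.symm)) hs
  unfold mpKernel
  exact continuousAt_const.div (by fun_prop) this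

lemma mpKernel_ge_of_mem_edge (hb : 0 < b) (ht : 0 < t) (hs : s ∈ Icc (b - 2 * t) (b - t))
    (hs₀ : 0 < s) : σ ^ 4 * b ^ 2 / (9 * (b + σ ^ 2)) / t ^ 2 ≤ mpKernel σ (b + t)⁻¹ s := by
  have hbt : 0 < b + t := by linarith
  have hgap : 1 - (b + t)⁻¹ * s = (b + t - s) / (b + t) := by field_simp
  have hgap_pos : 0 < 1 - (b + t)⁻¹ * s := by
    rw [hgap]; exact div_pos (by linarith [hs.2]) hbt
  have hgap_le : 1 - (b + t)⁻¹ * s ≤ 3 * t / b := by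
    rw [hgap]
    calc (b + t - s) / (b + t) ≤ 3 * t / (b + t) := by gcongr; linarith [hs.1]
      _ ≤ 3 * t / b := by gcongr; linarith
  calc σ ^ 4 * b ^ 2 / (9 * (b + σ ^ 2)) / t ^ 2 = σ ^ 4 / ((3 * t / b) ^ 2 * (b + σ ^ 2)) := by
        field_simp; ring
    _ ≤ mpKernel σ (b + t)⁻¹ s := by
        unfold mpKernel
        gcongr
        linarith [hs.2]

end Kernel

section FiniteMeasure

variable {μ : Measure ℝ} [IsFiniteMeasure μ] {b σ ρ t : ℝ}

lemma integrable_mpKernel (hμ : ∀ᵐ s ∂μ, s ∈ Ioc 0 b) (hρ : 0 ≤ ρ) (hρb : ρ * b < 1) :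
    Integrable (mpKernel σ ρ) μ := by
  refine (integrable_const (σ ^ 2 / (1 - ρ * b) ^ 2)).mono'
    measurable_mpKernel.aestronglyMeasurable ?_
  filter_upwards [hμ] with s hs
  rw [Real.norm_of_nonneg (mpKernel_nonneg hs.1.le)]
  exact mpKernel_le le_rfl hρ hρb (Ioc_subset_Icc_self hs)

lemma continuousOn_integral_mpKernel (hμ : ∀ᵐ s ∂μ, s ∈ Ioc 0 b) :
    ContinuousOn (fun ρ => ∫ s, mpKernel σ ρ s ∂μ) (Ico 0 (1 / b)) := by
  intro ρ₀ hρ₀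
  have hρ₀b := mul_lt_one_of_mem_Ico hρ₀
  obtain ⟨ρ₁, hρ₀ρ₁, hρ₁⟩ := exists_between hρ₀.2
  have hρ₁b := mul_lt_one_of_mem_Ico ⟨hρ₀.1.trans hρ₀ρ₁.le, hρ₁⟩
  refine (continuousAt_of_dominated (bound := fun _ => σ ^ 2 / (1 - ρ₁ * b) ^ 2)
    (Eventually.of_forall fun ρ => measurable_mpKernel.aestronglyMeasurable) ?_
    (integrable_const _) ?_).continuousWithinAt
  · filter_upwards [Iio_mem_nhds hρ₀ρ₁] with ρ hρ
    filter_upwards [hμ] with s hs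
    rw [Real.norm_of_nonneg (mpKernel_nonneg hs.1.le)]
    exact mpKernel_le hρ.le (hρ₀.1.trans hρ₀ρ₁.le) hρ₁b (Ioc_subset_Icc_self hs)
  · filter_upwards [hμ] with s hs
    refine continuousAt_mpKernel ?_ (by positivity [hs.1])
    nlinarith [mul_le_mul_of_nonneg_left hs.2 hρ₀.1]

lemma strictMonoOn_integral_mpKernel (hσ : σ ≠ 0) (hμ : ∀ᵐ s ∂μ, s ∈ Ioc 0 b) (hμ₀ : μ ≠ 0) :
    StrictMonoOn (fun ρ => ∫ s, mpKernel σ ρ s ∂μ) (Ico 0 (1 / b)) := by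
  intro ρ₁ h₁ ρ₂ h₂ h
  have hρ₂s : ∀ s ∈ Ioc 0 b, ρ₂ * s < 1 := fun s hs =>
    (mul_le_mul_of_nonneg_left hs.2 h₂.1).trans_lt (mul_lt_one_of_mem_Ico h₂)
  have hi₁ := integrable_mpKernel (σ := σ) hμ h₁.1 (mul_lt_one_of_mem_Ico h₁)
  have hi₂ := integrable_mpKernel (σ := σ) hμ h₂.1 (mul_lt_one_of_mem_Ico h₂)
  have hpos : ∀ᵐ s ∂μ, 0 < mpKernel σ ρ₂ s - mpKernel σ ρ₁ s := by
    filter_upwards [hμ] with s hs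
    exact sub_pos.2 (mpKernel_lt_mpKernel hσ hs.1 h (hρ₂s s hs))
  have : 0 < ∫ s, mpKernel σ ρ₂ s - mpKernel σ ρ₁ s ∂μ := by
    refine (integral_pos_iff_support_of_nonneg_ae
      (hpos.mono fun s hs => hs.le) (hi₂.sub hi₁)).2 ?_
    refine (Measure.measure_univ_pos.2 hμ₀).trans_le (measure_mono_ae ?_)
    filter_upwards [hpos] with s hs _ using hs.ne'
  rw [integral_sub hi₂ hi₁] at this
  exact sub_pos.1 this

lemma measureReal_mul_le_integral_mpKernel (hb : 0 < b) (hμ : ∀ᵐ s ∂μ, s ∈ Ioc 0 b)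
    (ht : 0 < t) (htb : 2 * t < b) :
    σ ^ 4 * b ^ 2 / (9 * (b + σ ^ 2)) / t ^ 2 * μ.real (Icc (b - 2 * t) (b - t)) ≤
      ∫ s, mpKernel σ (b + t)⁻¹ s ∂μ := by
  have hρ : 0 ≤ (b + t)⁻¹ := by positivity
  have hρb : (b + t)⁻¹ * b < 1 := by
    rw [inv_mul_lt_one₀ (by positivity)]; linarith
  have hint := integrable_mpKernel (σ := σ) hμ hρ hρb
  calc _ ≤ ∫ s in Icc (b - 2 * t) (b - t), mpKernel σ (b + t)⁻¹ s ∂μ :=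
        setIntegral_ge_of_const_le_real measurableSet_Icc (measure_ne_top _ _)
          (fun s hs => mpKernel_ge_of_mem_edge hb ht hs (by linarith [hs.1])) hint.integrableOn
    _ ≤ ∫ s, mpKernel σ (b + t)⁻¹ s ∂μ :=
        setIntegral_le_integral hint (hμ.mono fun s hs => mpKernel_nonneg hs.1.le)

lemma tendsto_integral_mpKernel (hσ : σ ≠ 0) (hb : 0 < b) (hμ : ∀ᵐ s ∂μ, s ∈ Ioc 0 b)
    {c p : ℝ} (hc : 0 < c) (hp : p < 2)
    (hmass : ∀ᶠ t in 𝓝[>] 0, c * t ^ p ≤ μ.real (Icc (b - 2 * t) (b - t))) :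
    Tendsto (fun ρ => ∫ s, mpKernel σ ρ s ∂μ) (𝓝[<] (1 / b)) atTop := by
  set K := σ ^ 4 * b ^ 2 / (9 * (b + σ ^ 2))
  have hK : 0 < K * c := by positivity
  have hedge : Tendsto (fun t => ∫ s, mpKernel σ (b + t)⁻¹ s ∂μ) (𝓝[>] 0) atTop := by
    refine tendsto_atTop_mono' _ ?_
      ((tendsto_rpow_neg_nhdsGT_zero (sub_neg.2 hp)).const_mul_atTop hK)
    have hsmall : ∀ᶠ t in 𝓝[>] (0 : ℝ), t < b / 2 :=
      nhdsWithin_le_nhds (eventually_lt_nhds (by positivity))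
    filter_upwards [hmass, self_mem_nhdsWithin, hsmall] with t hmt (ht : 0 < t) htb
    calc K * c * t ^ (p - 2) = K / t ^ 2 * (c * t ^ p) := by
          rw [rpow_sub ht, rpow_two]; field_simp
      _ ≤ K / t ^ 2 * μ.real (Icc (b - 2 * t) (b - t)) := by gcongr
      _ ≤ ∫ s, mpKernel σ (b + t)⁻¹ s ∂μ :=
          measureReal_mul_le_integral_mpKernel hb hμ ht (by linarith)
  have hgap : Tendsto (fun ρ => ρ⁻¹ - b) (𝓝[<] (1 / b)) (𝓝[>] 0) := by
    refine tendsto_nhdsWithin_iff.2 ⟨?_, ?_⟩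
    · have : ContinuousAt (fun ρ : ℝ => ρ⁻¹ - b) (1 / b) :=
        (continuousAt_inv₀ (one_div_pos.2 hb).ne').sub continuousAt_const
      simpa using this.tendsto.mono_left nhdsWithin_le_nhds
    · filter_upwards [Ioo_mem_nhdsLT (one_div_pos.2 hb)] with ρ hρ
      rw [mem_Ioi, sub_pos, lt_inv_comm₀ hb hρ.1, ← one_div]
      exact hρ.2
  refine (hedge.comp hgap).congr fun ρ => ?_
  simp only [Function.comp_apply, add_sub_cancel, inv_inv]

end FiniteMeasure

section MarchenkoPastur

variable {γ s t : ℝ}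

lemma lamM_pos (hγ : 1 < γ) : 0 < lamM γ := by
  have : 1 / √γ < 1 := (div_lt_one (by positivity)).2 (by simpa using sqrt_lt_sqrt zero_le_one hγ)
  unfold lamM
  nlinarith

lemma lamM_lt_lamP (hγ : 1 < γ) : lamM γ < lamP γ := by
  have : 0 < 1 / √γ := by positivity
  unfold lamM lamP
  nlinarith

lemma lamP_pos (hγ : 1 < γ) : 0 < lamP γ := (lamM_pos hγ).trans (lamM_lt_lamP hγ)

noncomputable def mpDensity (γ s : ℝ) : ℝ :=
  if lamM γ ≤ s ∧ s ≤ lamP γ then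
    γ / (2 * π) * √((lamP γ - s) * (s - lamM γ)) / s else 0

lemma MPlaw_eq_withDensity (γ : ℝ) :
    MPlaw γ = volume.withDensity fun s => ENNReal.ofReal (mpDensity γ s) := rfl

lemma mpDensity_eq_indicator (γ : ℝ) :
    mpDensity γ = (Icc (lamM γ) (lamP γ)).indicator
      fun s => γ / (2 * π) * √((lamP γ - s) * (s - lamM γ)) / s := by
  ext s
  simp only [mpDensity, indicator_apply, mem_Icc]

lemma ae_mem_Icc_MPlaw : ∀ᵐ s ∂MPlaw γ, s ∈ Icc (lamM γ) (lamP γ) := by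
  change MPlaw γ (Icc (lamM γ) (lamP γ))ᶜ = 0
  rw [MPlaw_eq_withDensity, withDensity_apply _ measurableSet_Icc.compl]
  refine setLIntegral_eq_zero measurableSet_Icc.compl fun s hs => ?_
  simp [mpDensity_eq_indicator, indicator_of_notMem hs]

lemma ae_mem_Ioc_MPlaw (hγ : 1 < γ) : ∀ᵐ s ∂MPlaw γ, s ∈ Ioc 0 (lamP γ) :=
  ae_mem_Icc_MPlaw.mono fun _ hs => ⟨(lamM_pos hγ).trans_le hs.1, hs.2⟩

lemma isFiniteMeasure_MPlaw (hγ : 1 < γ) : IsFiniteMeasure (MPlaw γ) := by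
  have hcont : ContinuousOn (fun s => γ / (2 * π) * √((lamP γ - s) * (s - lamM γ)) / s)
      (Icc (lamM γ) (lamP γ)) :=
    ContinuousOn.div (by fun_prop) continuousOn_id
      fun s hs => ((lamM_pos hγ).trans_le hs.1).ne'
  have hint : Integrable (mpDensity γ) := by
    rw [mpDensity_eq_indicator, integrable_indicator_iff measurableSet_Icc]
    exact hcont.integrableOn_Icc
  exact isFiniteMeasure_withDensity_ofReal hint.2

lemma mpDensity_ge_of_mem_edge (hγ : 1 < γ) (ht : 0 < t) (ht' : 4 * t ≤ lamP γ - lamM γ)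
    (hs : s ∈ Icc (lamP γ - 2 * t) (lamP γ - t)) :
    γ / (2 * π) * √((lamP γ - lamM γ) / 2) / lamP γ * √t ≤ mpDensity γ s := by
  obtain ⟨hs₁, hs₂⟩ := hs
  have hs₀ : 0 < s := by linarith [lamM_pos hγ]
  have : 0 < γ := by linarith
  have : (lamP γ - lamM γ) / 2 * t ≤ (lamP γ - s) * (s - lamM γ) := by nlinarith
  rw [mpDensity, if_pos ⟨by linarith, by linarith⟩]
  calc _ = γ / (2 * π) * √((lamP γ - lamM γ) / 2 * t) / lamP γ := by
        rw [sqrt_mul (by linarith)]; ring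
    _ ≤ γ / (2 * π) * √((lamP γ - s) * (s - lamM γ)) / s := by gcongr; linarith

lemma MPlaw_edge_mass (hγ : 1 < γ) : ∃ c > 0, ∀ᶠ t in 𝓝[>] 0,
    c * t ^ (3 / 2 : ℝ) ≤ (MPlaw γ).real (Icc (lamP γ - 2 * t) (lamP γ - t)) := by
  have := isFiniteMeasure_MPlaw hγ
  have hgap := lamM_lt_lamP hγ
  have := lamP_pos hγ
  have : 0 < γ := by linarith
  have : 0 < √((lamP γ - lamM γ) / 2) := sqrt_pos.2 (by linarith)
  set c := γ / (2 * π) * √((lamP γ - lamM γ) / 2) / lamP γ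
  refine ⟨c, by positivity, ?_⟩
  have hsmall : ∀ᶠ t in 𝓝[>] (0 : ℝ), 4 * t ≤ lamP γ - lamM γ :=
    nhdsWithin_le_nhds (eventually_le_nhds (by linarith : (0 : ℝ) < (lamP γ - lamM γ) / 4)
      |>.mono fun t ht => by linarith)
  filter_upwards [self_mem_nhdsWithin, hsmall] with t (ht : 0 < t) ht'
  have hmass : ENNReal.ofReal (c * √t) * volume (Icc (lamP γ - 2 * t) (lamP γ - t)) ≤
      MPlaw γ (Icc (lamP γ - 2 * t) (lamP γ - t)) := by
    rw [MPlaw_eq_withDensity, withDensity_apply _ measurableSet_Icc, ← setLIntegral_const]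
    exact setLIntegral_mono' measurableSet_Icc fun s hs =>
      ENNReal.ofReal_le_ofReal (mpDensity_ge_of_mem_edge hγ ht ht' hs)
  rw [Real.volume_Icc, ← ENNReal.ofReal_mul (by positivity),
    ENNReal.ofReal_le_iff_le_toReal (measure_ne_top _ _)] at hmass
  rw [measureReal_def]
  convert hmass using 1
  rw [show (3 / 2 : ℝ) = 1 / 2 + 1 by norm_num, rpow_add ht, rpow_one, ← sqrt_eq_rpow]
  ring

lemma MPlaw_ne_zero (hγ : 1 < γ) : MPlaw γ ≠ 0 := by
  obtain ⟨c, hc, hmass⟩ := MPlaw_edge_mass hγ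
  obtain ⟨t, hmt, ht⟩ := (hmass.and self_mem_nhdsWithin).exists
  intro h
  have : 0 < c * t ^ (3 / 2 : ℝ) := mul_pos hc (rpow_pos_of_pos ht _)
  simp [h] at hmt
  linarith

end MarchenkoPastur

/-- The map `ρ ↦ ∫ σ⁴/((1 − ρs)²(s + σ²)) dH(s)` is continuous and strictly
increasing on `[0, 1/λ₊)`, equals `ε_σ²` at `ρ = 0`, blows up as `ρ ↑ 1/λ₊`,
and for every `ε² ≥ ε_σ²` there is a unique `ρ(ε) ∈ [0, 1/λ₊)` with value `ε²`. -/
theorem stmt12 (γ σ : ℝ) (hγ : 1 < γ) (hσ : 0 < σ) :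
    let F : ℝ → ℝ := fun ρ => ∫ s, σ ^ 4 / ((1 - ρ * s) ^ 2 * (s + σ ^ 2)) ∂(MPlaw γ)
    ContinuousOn F (Set.Ico 0 (1 / lamP γ)) ∧
    StrictMonoOn F (Set.Ico 0 (1 / lamP γ)) ∧
    F 0 = ∫ s, σ ^ 4 / (s + σ ^ 2) ∂(MPlaw γ) ∧
    Tendsto F (nhdsWithin (1 / lamP γ) (Set.Iio (1 / lamP γ))) atTop ∧
    ∀ ε2 : ℝ, (∫ s, σ ^ 4 / (s + σ ^ 2) ∂(MPlaw γ)) ≤ ε2 →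
      ∃! ρ : ℝ, ρ ∈ Set.Ico 0 (1 / lamP γ) ∧ F ρ = ε2 := by
  intro F
  have := isFiniteMeasure_MPlaw hγ
  have hsupp := ae_mem_Ioc_MPlaw hγ
  obtain ⟨c, hc, hmass⟩ := MPlaw_edge_mass hγ
  have hcont : ContinuousOn F (Ico 0 (1 / lamP γ)) := continuousOn_integral_mpKernel hsupp
  have hmono : StrictMonoOn F (Ico 0 (1 / lamP γ)) :=
    strictMonoOn_integral_mpKernel hσ.ne' hsupp (MPlaw_ne_zero hγ)
  have hF0 : F 0 = ∫ s, σ ^ 4 / (s + σ ^ 2) ∂(MPlaw γ) := by simp [F]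
  have htend : Tendsto F (𝓝[<] (1 / lamP γ)) atTop :=
    tendsto_integral_mpKernel hσ.ne' (lamP_pos hγ) hsupp hc (by norm_num) hmass
  refine ⟨hcont, hmono, hF0, htend, fun ε2 hε2 => ?_⟩
  exact hmono.existsUnique_eq_of_tendsto_atTop (by simpa using lamP_pos hγ) hcont htend
    (hF0 ▸ hε2)
end

section
/- Let X ∈ ℝ^{n×d} with n ≤ d and X X^T invertible, and σ > 0. For A_ols = X^T(XX^T)^{-1} and A_ridge = (X^T X + dσ² I)^{-1} X^T, with P(A) = (1/d)‖AX − I‖_F² + σ²‖A‖_F², one has P(A_ols) − P(A_ridge) = −n/d + σ² Tr((XX^T)^{-1}) + (1/d) Tr(XX^T (XX^T + dσ² I)^{-1}). -/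
open Matrix

/-- Prediction error functional in the isotropic case:
`P(A) = (1/d)‖AX − I‖_F² + σ²‖A‖_F²`. -/
noncomputable def predErrIso (n d : ℕ) (X : Matrix (Fin n) (Fin d) ℝ)
    (σ : ℝ) (A : Matrix (Fin d) (Fin n) ℝ) : ℝ :=
  (1 / (d : ℝ)) * frobSq (A * X - 1) + σ ^ 2 * frobSq A

/-!
Write `G = XXᵀ` and `M = G + dσ²I`. By the push-through identity
`(XᵀX + dσ²I)⁻¹Xᵀ = XᵀM⁻¹`, both estimators have the form `XᵀS` with `S` symmetric. Expanding
the Frobenius norms, the two quadratic terms `Tr(SGSG)` and `dσ² Tr(SGS)` combine into one, so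
`d·P(XᵀS) = d - 2 Tr(SG) + Tr(SGSM)`.
For `S = G⁻¹` this is `d - n + dσ² Tr(G⁻¹)`; for `S = M⁻¹` the last trace collapses to
`Tr(M⁻¹G)`, leaving `d - Tr(GM⁻¹)`.
-/

namespace Matrix

variable {m n : Type*} [Fintype m] [Fintype n] [DecidableEq m]

lemma inv_mul_eq_mul_inv_of_mul_eq {R : Type*} [CommRing R] [DecidableEq n] {A : Matrix m m R}
    {B : Matrix n n R} {C : Matrix m n R} (hA : IsUnit A.det) (hB : IsUnit B.det)
    (h : A * C = C * B) : A⁻¹ * C = C * B⁻¹ :=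
  calc A⁻¹ * C = A⁻¹ * (C * B) * B⁻¹ := by
        rw [Matrix.mul_assoc, mul_nonsing_inv_cancel_right _ _ hB]
    _ = C * B⁻¹ := by rw [← h, nonsing_inv_mul_cancel_left _ _ hA]

lemma isUnit_det_add_smul_one {A : Matrix m m ℝ} (hA : A.PosSemidef) {c : ℝ} (hc : 0 < c) :
    IsUnit (A + c • 1).det :=
  (isUnit_iff_isUnit_det _).1 (PosDef.posSemidef_add hA (PosDef.one.smul hc)).isUnit

lemma isUnit_det_mul_transpose_add_smul_one (X : Matrix m n ℝ) {c : ℝ} (hc : 0 < c) :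
    IsUnit (X * Xᵀ + c • 1).det := by
  simpa using isUnit_det_add_smul_one (posSemidef_self_mul_conjTranspose X) hc

lemma transpose_mul_self_add_smul_one_inv_mul_transpose [DecidableEq n] (X : Matrix m n ℝ)
    {c : ℝ} (hc : 0 < c) : (Xᵀ * X + c • 1)⁻¹ * Xᵀ = Xᵀ * (X * Xᵀ + c • 1)⁻¹ := by
  refine inv_mul_eq_mul_inv_of_mul_eq ?_ (isUnit_det_mul_transpose_add_smul_one X hc) ?_
  · simpa using isUnit_det_mul_transpose_add_smul_one Xᵀ hc
  · simp only [Matrix.add_mul, Matrix.mul_add, Matrix.mul_assoc, smul_mul, Matrix.mul_smul,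
      Matrix.one_mul, Matrix.mul_one]

end Matrix

lemma frobSq_sub_one {k : ℕ} (B : Matrix (Fin k) (Fin k) ℝ) :
    frobSq (B - 1) = frobSq B - 2 * trace B + k := by
  simp only [frobSq, transpose_sub, transpose_one, Matrix.sub_mul, Matrix.mul_sub,
    Matrix.mul_one, Matrix.one_mul, trace_sub, trace_transpose, trace_one, Fintype.card_fin]
  ring

section

variable {n d : ℕ} (X : Matrix (Fin n) (Fin d) ℝ) (σ : ℝ)

lemma frobSq_transpose_mul {k : ℕ} (S : Matrix (Fin n) (Fin k) ℝ) :
    frobSq (Xᵀ * S) = trace (Sᵀ * (X * Xᵀ) * S) := by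
  simp only [frobSq, transpose_mul, transpose_transpose, Matrix.mul_assoc]

lemma frobSq_transpose_mul_mul (S : Matrix (Fin n) (Fin n) ℝ) :
    frobSq (Xᵀ * S * X) = trace (Sᵀ * (X * Xᵀ) * S * (X * Xᵀ)) := by
  rw [Matrix.mul_assoc, frobSq_transpose_mul, transpose_mul]
  simp only [Matrix.mul_assoc]
  rw [trace_mul_comm]
  simp only [Matrix.mul_assoc]

lemma predErrIso_transpose_mul (S : Matrix (Fin n) (Fin n) ℝ) (hd : d ≠ 0) :
    predErrIso n d X σ (Xᵀ * S)
      = 1 + (trace (Sᵀ * (X * Xᵀ) * S * (X * Xᵀ + ((d : ℝ) * σ ^ 2) • 1))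
          - 2 * trace (S * (X * Xᵀ))) / d := by
  have htr : trace (Xᵀ * S * X) = trace (S * (X * Xᵀ)) := by
    rw [Matrix.mul_assoc, trace_mul_comm, Matrix.mul_assoc]
  rw [predErrIso, frobSq_sub_one, frobSq_transpose_mul_mul, frobSq_transpose_mul, htr,
    Matrix.mul_add, trace_add, Matrix.mul_smul, Matrix.mul_one, trace_smul, smul_eq_mul]
  field_simp
  ring

lemma predErrIso_ols (hd : d ≠ 0) (hX : IsUnit (X * Xᵀ).det) :
    predErrIso n d X σ (Xᵀ * (X * Xᵀ)⁻¹) = 1 - n / d + σ ^ 2 * trace (X * Xᵀ)⁻¹ := by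
  have hsymm : ((X * Xᵀ)⁻¹)ᵀ = (X * Xᵀ)⁻¹ := by
    rw [transpose_nonsing_inv, transpose_mul, transpose_transpose]
  rw [predErrIso_transpose_mul X σ _ hd, hsymm, nonsing_inv_mul _ hX, Matrix.one_mul,
    Matrix.mul_add, nonsing_inv_mul _ hX, trace_add, Matrix.mul_smul, Matrix.mul_one,
    trace_smul, trace_one, Fintype.card_fin, smul_eq_mul]
  field_simp
  ring

lemma predErrIso_ridge (hd : d ≠ 0) (hM : IsUnit (X * Xᵀ + ((d : ℝ) * σ ^ 2) • 1).det) :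
    predErrIso n d X σ (Xᵀ * (X * Xᵀ + ((d : ℝ) * σ ^ 2) • 1)⁻¹)
      = 1 - trace (X * Xᵀ * (X * Xᵀ + ((d : ℝ) * σ ^ 2) • 1)⁻¹) / d := by
  have hsymm : ((X * Xᵀ + ((d : ℝ) * σ ^ 2) • 1)⁻¹)ᵀ = (X * Xᵀ + ((d : ℝ) * σ ^ 2) • 1)⁻¹ := by
    rw [transpose_nonsing_inv]
    simp
  rw [predErrIso_transpose_mul X σ _ hd, hsymm, nonsing_inv_mul_cancel_right _ _ hM,
    trace_mul_comm _ (X * Xᵀ)]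
  ring

end

theorem stmt16_general (n d : ℕ) (hd : 0 < d)
    (X : Matrix (Fin n) (Fin d) ℝ) (hX : IsUnit (X * Xᵀ).det)
    (σ : ℝ) (hσ : 0 < σ) :
    predErrIso n d X σ (Xᵀ * (X * Xᵀ)⁻¹)
        - predErrIso n d X σ ((Xᵀ * X + ((d : ℝ) * σ ^ 2) • 1)⁻¹ * Xᵀ)
      = -((n : ℝ) / (d : ℝ)) + σ ^ 2 * Matrix.trace (X * Xᵀ)⁻¹
        + (1 / (d : ℝ)) * Matrix.trace (X * Xᵀ * (X * Xᵀ + ((d : ℝ) * σ ^ 2) • 1)⁻¹) := by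
  have hc : 0 < (d : ℝ) * σ ^ 2 := by positivity
  rw [transpose_mul_self_add_smul_one_inv_mul_transpose X hc, predErrIso_ols X σ hd.ne' hX,
    predErrIso_ridge X σ hd.ne' (isUnit_det_mul_transpose_add_smul_one X hc)]
  ring

/-- For `A_ols = Xᵀ(XXᵀ)⁻¹` and `A_ridge = (XᵀX + dσ²I)⁻¹Xᵀ`,
`P(A_ols) − P(A_ridge) = −n/d + σ² Tr((XXᵀ)⁻¹) + (1/d) Tr(XXᵀ(XXᵀ + dσ²I)⁻¹)`. -/
theorem stmt16 (n d : ℕ) (hnd : n ≤ d) (hd : 0 < d)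
    (X : Matrix (Fin n) (Fin d) ℝ) (hX : IsUnit (X * Xᵀ).det)
    (σ : ℝ) (hσ : 0 < σ) :
    predErrIso n d X σ (Xᵀ * (X * Xᵀ)⁻¹)
        - predErrIso n d X σ ((Xᵀ * X + ((d : ℝ) * σ ^ 2) • 1)⁻¹ * Xᵀ)
      = -((n : ℝ) / (d : ℝ)) + σ ^ 2 * Matrix.trace (X * Xᵀ)⁻¹
        + (1 / (d : ℝ)) * Matrix.trace (X * Xᵀ * (X * Xᵀ + ((d : ℝ) * σ ^ 2) • 1)⁻¹) :=
  stmt16_general n d hd X hX σ hσ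
end

section
/- Let Z ∈ ℝ^{n×d} and Σ ∈ ℝ^{d×d} symmetric with (1/κ) I ⪯ Σ ⪯ I for some κ ≥ 1, set X = ZΣ^{1/2}, and let σ > 0, ρ ≥ 0 with ρ‖Z‖_op²/d < 1 and Σ − (ρ/d)X^T X ≻ 0. Then (ρ²σ⁴/d)·Tr((Σ − (ρ/d)X^T X)^{-1} Σ (Σ − (ρ/d)X^T X)^{-1} X^T(XX^T + dσ² I)^{-1} X) ≥ (ρ²σ⁴/d)·Tr((I − (ρ/d)ZZ^T)^{-2} (ZZ^T/d)(ZZ^T/d + σ² I)^{-1}). -/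
open Matrix
open scoped Matrix.Norms.L2Operator

set_option linter.unusedSectionVars false

section Helpers

variable {p q : Type*} [Fintype p] [DecidableEq p] [Fintype q] [DecidableEq q]

lemma psd_smul_nonneg {A : Matrix p p ℝ} (hA : A.PosSemidef) {c : ℝ} (hc : 0 ≤ c) :
    (c • A).PosSemidef := by
  refine .of_dotProduct_mulVec_nonneg ?_ ?_
  · show (c • A)ᴴ = c • A
    rw [conjTranspose_smul, star_trivial, hA.1]
  · intro x
    rw [smul_mulVec, dotProduct_smul, smul_eq_mul]
    exact mul_nonneg hc (hA.dotProduct_mulVec_nonneg x)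

lemma psd_trace_nonneg {A : Matrix p p ℝ} (hA : A.PosSemidef) : 0 ≤ A.trace := by
  rw [Matrix.trace]
  apply Finset.sum_nonneg
  intro i _
  have := hA.dotProduct_mulVec_nonneg (Pi.single i 1)
  simpa [Matrix.diag, dotProduct, mulVec, Pi.single_apply] using this

open scoped MatrixOrder in
lemma trace_mul_psd_nonneg {A B : Matrix p p ℝ} (hA : A.PosSemidef) (hB : B.PosSemidef) :
    0 ≤ (A * B).trace := by
  obtain ⟨C, rfl⟩ := CStarAlgebra.nonneg_iff_eq_star_mul_self.mp hA.nonneg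
  rw [Matrix.mul_assoc, Matrix.trace_mul_comm]
  exact psd_trace_nonneg (hB.mul_mul_conjTranspose_same C)

lemma commute_inv_of {A : Matrix p q ℝ} {P : Matrix q q ℝ} {Q : Matrix p p ℝ}
    (hP : IsUnit P.det) (hQ : IsUnit Q.det) (h : A * P = Q * A) : A * P⁻¹ = Q⁻¹ * A := by
  calc A * P⁻¹ = Q⁻¹ * (Q * A) * P⁻¹ := by
        rw [Matrix.nonsing_inv_mul_cancel_left _ _ hQ]
    _ = Q⁻¹ * (A * P) * P⁻¹ := by rw [h]
    _ = Q⁻¹ * A := by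
        rw [← Matrix.mul_assoc Q⁻¹ A P, Matrix.mul_nonsing_inv_cancel_right _ _ hP]

lemma inv_sub_inv_psd {A B : Matrix p p ℝ} (hA : A.PosDef) (hB : B.PosDef)
    (hAB : (B - A).PosSemidef) : (A⁻¹ - B⁻¹).PosSemidef := by
  have hAd : IsUnit A.det := hA.det_pos.ne'.isUnit
  have hBd : IsUnit B.det := hB.det_pos.ne'.isUnit
  set D := B - A with hD
  have h0 : A⁻¹ - B⁻¹ = A⁻¹ * D * B⁻¹ := by
    rw [hD, Matrix.mul_sub, Matrix.sub_mul, Matrix.mul_assoc, Matrix.mul_nonsing_inv _ hBd,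
      Matrix.mul_one, Matrix.nonsing_inv_mul _ hAd, Matrix.one_mul]
  have h1 : A⁻¹ = B⁻¹ + B⁻¹ * D * A⁻¹ := by
    have : B⁻¹ * (A + D) * A⁻¹ = B⁻¹ + B⁻¹ * D * A⁻¹ := by
      rw [Matrix.mul_add, Matrix.add_mul, Matrix.mul_nonsing_inv_cancel_right _ _ hAd]
    rw [← this, hD]
    rw [show A + (B - A) = B by abel, Matrix.nonsing_inv_mul _ hBd, Matrix.one_mul]
  have key : A⁻¹ - B⁻¹ = B⁻¹ * D * B⁻¹ + (D * B⁻¹)ᴴ * A⁻¹ * (D * B⁻¹) := by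
    have hBsym : (B⁻¹)ᴴ = B⁻¹ := (hB.inv).isHermitian
    have hDsym : Dᴴ = D := hAB.isHermitian
    rw [conjTranspose_mul, hBsym, hDsym]
    rw [h0]
    nth_rewrite 1 [h1]
    noncomm_ring
  rw [key]
  have t1 : (B⁻¹ * D * B⁻¹).PosSemidef := by
    have := hAB.mul_mul_conjTranspose_same (B⁻¹)
    rwa [(hB.inv).isHermitian] at this
  have t2 : ((D * B⁻¹)ᴴ * A⁻¹ * (D * B⁻¹)).PosSemidef :=
    (hA.inv).posSemidef.conjTranspose_mul_mul_same _
  exact t1.add t2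

lemma dot_self_eq_norm_sq (v : q → ℝ) :
    v ⬝ᵥ v = ‖(EuclideanSpace.equiv q ℝ).symm v‖ ^ 2 := by
  rw [EuclideanSpace.norm_eq, Real.sq_sqrt (by positivity)]
  simp [dotProduct, sq]

lemma one_sub_smul_mul_transpose_posdef {c : ℝ} (hc : 0 ≤ c) (A : Matrix p q ℝ)
    (h : c * ‖A‖ ^ 2 < 1) :
    ((1 : Matrix p p ℝ) - c • (A * Aᵀ)).PosDef := by
  refine .of_dotProduct_mulVec_pos ?_ ?_
  · show _ = _
    rw [conjTranspose_sub, conjTranspose_one, conjTranspose_smul, star_trivial,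
      ← conjTranspose_eq_transpose_of_trivial, isHermitian_mul_conjTranspose_self]
  · intro x hx
    have hx' : (0:ℝ) < ‖(EuclideanSpace.equiv p ℝ).symm x‖ := by
      rw [norm_pos_iff]
      exact fun hc0 => hx (by simpa using congrArg (EuclideanSpace.equiv p ℝ) hc0)
    have hquad : star x ⬝ᵥ ((1 - c • (A * Aᵀ)) *ᵥ x)
        = x ⬝ᵥ x - c * ((Aᵀ *ᵥ x) ⬝ᵥ (Aᵀ *ᵥ x)) := by
      rw [star_trivial, sub_mulVec, one_mulVec, dotProduct_sub, smul_mulVec,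
        dotProduct_smul, smul_eq_mul, ← Matrix.mulVec_mulVec, dotProduct_mulVec,
        ← Matrix.mulVec_transpose]
    rw [hquad, dot_self_eq_norm_sq, dot_self_eq_norm_sq]
    have hA' : ‖(EuclideanSpace.equiv q ℝ).symm (Aᵀ *ᵥ x)‖ ≤ ‖A‖ * ‖(EuclideanSpace.equiv p ℝ).symm x‖ := by
      have := Matrix.l2_opNorm_mulVec Aᵀ ((EuclideanSpace.equiv p ℝ).symm x)
      rwa [← conjTranspose_eq_transpose_of_trivial, Matrix.l2_opNorm_conjTranspose] at this
    have hb : c * ‖(EuclideanSpace.equiv q ℝ).symm (Aᵀ *ᵥ x)‖ ^ 2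
        ≤ c * (‖A‖ ^ 2 * ‖(EuclideanSpace.equiv p ℝ).symm x‖ ^ 2) := by
      apply mul_le_mul_of_nonneg_left _ hc
      calc ‖(EuclideanSpace.equiv q ℝ).symm (Aᵀ *ᵥ x)‖ ^ 2
          ≤ (‖A‖ * ‖(EuclideanSpace.equiv p ℝ).symm x‖) ^ 2 := by
            apply sq_le_sq' _ hA'
            nlinarith [norm_nonneg ((EuclideanSpace.equiv q ℝ).symm (Aᵀ *ᵥ x)), hA']
        _ = ‖A‖ ^ 2 * ‖(EuclideanSpace.equiv p ℝ).symm x‖ ^ 2 := by ring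
    nlinarith [mul_lt_mul_of_pos_right h (pow_pos hx' 2)]

end Helpers

/-- Lower bound on the prediction-error increment: reducing the general covariance
case to the isotropic one. Here `X = ZΣ^{1/2}` with `(1/κ)I ⪯ Σ ⪯ I`. -/
theorem stmt17 (n d : ℕ) (hd : 0 < d)
    (Z : Matrix (Fin n) (Fin d) ℝ)
    (Sigma R : Matrix (Fin d) (Fin d) ℝ) (κ : ℝ) (hκ : 1 ≤ κ)
    (hSigSym : Sigma.IsSymm)
    (hlow : (Sigma - (1 / κ) • (1 : Matrix (Fin d) (Fin d) ℝ)).PosSemidef)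
    (hup : ((1 : Matrix (Fin d) (Fin d) ℝ) - Sigma).PosSemidef)
    (hR : R.PosSemidef) (hRsq : R * R = Sigma)
    (X : Matrix (Fin n) (Fin d) ℝ) (hX : X = Z * R)
    (σ ρ : ℝ) (hσ : 0 < σ) (hρ : 0 ≤ ρ)
    (hop : ρ * ‖Z‖ ^ 2 / (d : ℝ) < 1)
    (hpd : (Sigma - (ρ / (d : ℝ)) • (Xᵀ * X)).PosDef) :
    (ρ ^ 2 * σ ^ 4 / (d : ℝ)) *
        Matrix.trace (((1 : Matrix (Fin n) (Fin n) ℝ) - (ρ / (d : ℝ)) • (Z * Zᵀ))⁻¹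
          * ((1 : Matrix (Fin n) (Fin n) ℝ) - (ρ / (d : ℝ)) • (Z * Zᵀ))⁻¹
          * ((1 / (d : ℝ)) • (Z * Zᵀ))
          * ((1 / (d : ℝ)) • (Z * Zᵀ) + σ ^ 2 • 1)⁻¹)
      ≤ (ρ ^ 2 * σ ^ 4 / (d : ℝ)) *
          Matrix.trace ((Sigma - (ρ / (d : ℝ)) • (Xᵀ * X))⁻¹ * Sigma
            * (Sigma - (ρ / (d : ℝ)) • (Xᵀ * X))⁻¹
            * (Xᵀ * (X * Xᵀ + ((d : ℝ) * σ ^ 2) • 1)⁻¹ * X)) := by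
  have hd0 : (d : ℝ) ≠ 0 := Nat.cast_ne_zero.mpr hd.ne'
  set c : ℝ := ρ / d with hcdef
  have hc : 0 ≤ c := div_nonneg hρ (Nat.cast_nonneg d)
  have hc1 : c * ‖Z‖ ^ 2 < 1 := by rw [hcdef, div_mul_eq_mul_div]; exact hop
  set s : ℝ := (d : ℝ) * σ ^ 2 with hsdef
  have hs : 0 < s := by positivity
  set N : Matrix (Fin n) (Fin n) ℝ := 1 - c • (Z * Zᵀ) with hNdef
  set M : Matrix (Fin d) (Fin d) ℝ := 1 - c • (Zᵀ * Z) with hMdef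
  set T : Matrix (Fin n) (Fin n) ℝ := Z * Zᵀ + s • 1 with hTdef
  set T' : Matrix (Fin d) (Fin d) ℝ := Zᵀ * Z + s • 1 with hT'def
  set S : Matrix (Fin n) (Fin n) ℝ := Z * Sigma * Zᵀ + s • 1 with hSdef
  -- positive definiteness facts
  have hNpd : N.PosDef := one_sub_smul_mul_transpose_posdef hc Z hc1
  have hMpd : M.PosDef := by
    have h2 : c * ‖Zᵀ‖ ^ 2 < 1 := by
      rwa [← conjTranspose_eq_transpose_of_trivial, Matrix.l2_opNorm_conjTranspose]
    have := one_sub_smul_mul_transpose_posdef hc Zᵀ h2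
    rwa [transpose_transpose] at this
  have hZZt_psd : (Z * Zᵀ).PosSemidef := by
    have := Matrix.posSemidef_self_mul_conjTranspose Z
    rwa [conjTranspose_eq_transpose_of_trivial] at this
  have hZtZ_psd : (Zᵀ * Z).PosSemidef := by
    have := Matrix.posSemidef_conjTranspose_mul_self Z
    rwa [conjTranspose_eq_transpose_of_trivial] at this
  have hs1n : ((s : ℝ) • (1 : Matrix (Fin n) (Fin n) ℝ)).PosDef := by
    rw [Matrix.smul_one_eq_diagonal]
    exact Matrix.posDef_diagonal_iff.mpr fun i => hs
  have hs1d : ((s : ℝ) • (1 : Matrix (Fin d) (Fin d) ℝ)).PosDef := by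
    rw [Matrix.smul_one_eq_diagonal]
    exact Matrix.posDef_diagonal_iff.mpr fun i => hs
  have hTpd : T.PosDef := Matrix.PosDef.posSemidef_add hZZt_psd hs1n
  have hT'pd : T'.PosDef := Matrix.PosDef.posSemidef_add hZtZ_psd hs1d
  have hXtX_psd : (Xᵀ * X).PosSemidef := by
    have := Matrix.posSemidef_conjTranspose_mul_self X
    rwa [conjTranspose_eq_transpose_of_trivial] at this
  have hSigPd : Sigma.PosDef := by
    have := Matrix.PosDef.add_posSemidef hpd (psd_smul_nonneg hXtX_psd hc)
    rwa [sub_add_cancel] at this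
  have hSpd : S.PosDef := by
    refine Matrix.PosDef.posSemidef_add ?_ hs1n
    have := hSigPd.posSemidef.mul_mul_conjTranspose_same Z
    rwa [conjTranspose_eq_transpose_of_trivial] at this
  have hNdet : IsUnit N.det := hNpd.det_pos.ne'.isUnit
  have hMdet : IsUnit M.det := hMpd.det_pos.ne'.isUnit
  have hTdet : IsUnit T.det := hTpd.det_pos.ne'.isUnit
  have hT'det : IsUnit T'.det := hT'pd.det_pos.ne'.isUnit
  have hSdet : IsUnit S.det := hSpd.det_pos.ne'.isUnit
  have hRdet : IsUnit R.det := by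
    refine (?_ : R.det ≠ 0).isUnit
    intro h0
    have h2 : R.det * R.det = Sigma.det := by rw [← Matrix.det_mul, hRsq]
    rw [h0, mul_zero] at h2
    exact absurd h2.symm hSigPd.det_pos.ne'
  have hRt : Rᵀ = R := by
    rw [← conjTranspose_eq_transpose_of_trivial]; exact hR.isHermitian
  -- commutation relations
  have hZN : Zᵀ * N = M * Zᵀ := by
    simp only [hNdef, hMdef, Matrix.mul_sub, Matrix.sub_mul, Matrix.mul_one, Matrix.one_mul,
      Matrix.mul_smul, Matrix.smul_mul, Matrix.mul_assoc]
  have hZT : Zᵀ * T = T' * Zᵀ := by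
    simp only [hTdef, hT'def, Matrix.mul_add, Matrix.add_mul, Matrix.mul_one, Matrix.one_mul,
      Matrix.mul_smul, Matrix.smul_mul, Matrix.mul_assoc]
  have hZT2 : Z * T' = T * Z := by
    simp only [hTdef, hT'def, Matrix.mul_add, Matrix.add_mul, Matrix.mul_one, Matrix.one_mul,
      Matrix.mul_smul, Matrix.smul_mul, Matrix.mul_assoc]
  have hZNi : Zᵀ * N⁻¹ = M⁻¹ * Zᵀ := commute_inv_of hNdet hMdet hZN
  have hZTi : Zᵀ * T⁻¹ = T'⁻¹ * Zᵀ := commute_inv_of hTdet hT'det hZT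
  have hZT2i : Z * T'⁻¹ = T⁻¹ * Z := commute_inv_of hT'det hTdet hZT2
  have hZNi' : ∀ w : Matrix (Fin n) (Fin d) ℝ, Zᵀ * (N⁻¹ * w) = M⁻¹ * (Zᵀ * w) := by
    intro w; rw [← Matrix.mul_assoc, hZNi, Matrix.mul_assoc]
  -- LHS trace computation
  have e0 : (1 / (d : ℝ)) • (Z * Zᵀ) + σ ^ 2 • (1 : Matrix (Fin n) (Fin n) ℝ)
      = (1 / (d : ℝ)) • T := by
    rw [hTdef, smul_add, smul_smul, show (1 / (d : ℝ)) * s = σ ^ 2 by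
      rw [hsdef]; field_simp]
  have e1 : ((1 / (d : ℝ)) • T)⁻¹ = (d : ℝ) • T⁻¹ := by
    apply Matrix.inv_eq_right_inv
    rw [Matrix.smul_mul, Matrix.mul_smul, smul_smul, Matrix.mul_nonsing_inv _ hTdet,
      show (1 / (d : ℝ)) * (d : ℝ) = 1 by field_simp, one_smul]
  have lhs_eq : Matrix.trace (N⁻¹ * N⁻¹ * ((1 / (d : ℝ)) • (Z * Zᵀ))
        * ((1 / (d : ℝ)) • (Z * Zᵀ) + σ ^ 2 • 1)⁻¹)
      = Matrix.trace (M⁻¹ * (M⁻¹ * (Zᵀ * (T⁻¹ * Z)))) := by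
    rw [e0, e1]
    have e2 : N⁻¹ * N⁻¹ * ((1 / (d : ℝ)) • (Z * Zᵀ)) * ((d : ℝ) • T⁻¹)
        = N⁻¹ * (N⁻¹ * (Z * (Zᵀ * T⁻¹))) := by
      simp only [Matrix.mul_smul, Matrix.smul_mul, smul_smul]
      rw [show (d : ℝ) * (1 / (d : ℝ)) = 1 by field_simp, one_smul]
      simp only [Matrix.mul_assoc]
    rw [e2]
    calc Matrix.trace (N⁻¹ * (N⁻¹ * (Z * (Zᵀ * T⁻¹))))
        = Matrix.trace ((N⁻¹ * (N⁻¹ * Z)) * (Zᵀ * T⁻¹)) := by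
          simp only [Matrix.mul_assoc]
      _ = Matrix.trace ((Zᵀ * T⁻¹) * (N⁻¹ * (N⁻¹ * Z))) := Matrix.trace_mul_comm _ _
      _ = Matrix.trace (T'⁻¹ * (M⁻¹ * (M⁻¹ * (Zᵀ * Z)))) := by
          rw [hZTi]
          simp only [Matrix.mul_assoc, hZNi']
      _ = Matrix.trace ((M⁻¹ * (M⁻¹ * (Zᵀ * Z))) * T'⁻¹) := Matrix.trace_mul_comm _ _
      _ = Matrix.trace (M⁻¹ * (M⁻¹ * (Zᵀ * (T⁻¹ * Z)))) := by
          simp only [Matrix.mul_assoc]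
          rw [hZT2i]
  -- RHS trace computation
  have hXX : Xᵀ * X = R * (Zᵀ * Z) * R := by
    rw [hX, Matrix.transpose_mul, hRt]; simp only [Matrix.mul_assoc]
  have hA0 : Sigma - c • (Xᵀ * X) = R * M * R := by
    rw [hMdef, hXX, ← hRsq]
    simp only [Matrix.mul_sub, Matrix.sub_mul, Matrix.mul_smul, Matrix.smul_mul,
      Matrix.mul_one, Matrix.one_mul, Matrix.mul_assoc]
  have hA0inv : (R * M * R)⁻¹ = R⁻¹ * (M⁻¹ * R⁻¹) := by
    rw [Matrix.mul_inv_rev, Matrix.mul_inv_rev]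
  have hXXt : X * Xᵀ + ((d : ℝ) * σ ^ 2) • (1 : Matrix (Fin n) (Fin n) ℝ) = S := by
    rw [hSdef, hX, Matrix.transpose_mul, hRt, ← hRsq, ← hsdef]
    simp only [Matrix.mul_assoc]
  have cR1 : ∀ w : Matrix (Fin d) (Fin d) ℝ, R⁻¹ * (R * w) = w := fun w =>
    Matrix.nonsing_inv_mul_cancel_left _ _ hRdet
  have cR2 : ∀ w : Matrix (Fin d) (Fin d) ℝ, R * (R⁻¹ * w) = w := fun w =>
    Matrix.mul_nonsing_inv_cancel_left _ _ hRdet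
  have cR3 : R * R⁻¹ = 1 := Matrix.mul_nonsing_inv _ hRdet
  have rhs_eq : Matrix.trace ((Sigma - c • (Xᵀ * X))⁻¹ * Sigma
        * (Sigma - c • (Xᵀ * X))⁻¹ * (Xᵀ * (X * Xᵀ + ((d : ℝ) * σ ^ 2) • 1)⁻¹ * X))
      = Matrix.trace (M⁻¹ * (M⁻¹ * (Zᵀ * (S⁻¹ * Z)))) := by
    rw [hA0, hA0inv, hXXt, ← hRsq, hX, Matrix.transpose_mul, hRt]
    have e3 : R⁻¹ * (M⁻¹ * R⁻¹) * (R * R) * (R⁻¹ * (M⁻¹ * R⁻¹))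
          * (R * Zᵀ * S⁻¹ * (Z * R))
        = R⁻¹ * ((M⁻¹ * (M⁻¹ * (Zᵀ * (S⁻¹ * Z)))) * R) := by
      simp only [Matrix.mul_assoc, cR1, cR2]
    rw [e3, Matrix.trace_mul_comm]
    simp only [Matrix.mul_assoc, cR3, Matrix.mul_one]
  rw [lhs_eq, rhs_eq]
  -- the inequality between the canonical traces
  have hMM : (M⁻¹ * M⁻¹).PosSemidef := by
    have := hMpd.inv.posSemidef.pow 2
    rwa [pow_two] at this
  have hTS : (T - S).PosSemidef := by
    have h4 : T - S = Z * (1 - Sigma) * Zᵀ := by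
      rw [hTdef, hSdef]
      simp only [Matrix.mul_sub, Matrix.sub_mul, Matrix.mul_one, Matrix.one_mul]
      abel
    rw [h4, ← conjTranspose_eq_transpose_of_trivial]
    exact hup.mul_mul_conjTranspose_same Z
  have hST : (S⁻¹ - T⁻¹).PosSemidef := inv_sub_inv_psd hSpd hTpd hTS
  have hZSTZ : (Zᵀ * (S⁻¹ - T⁻¹) * Z).PosSemidef := by
    have := hST.conjTranspose_mul_mul_same Z
    rwa [conjTranspose_eq_transpose_of_trivial] at this
  have htr : 0 ≤ ((M⁻¹ * M⁻¹) * (Zᵀ * (S⁻¹ - T⁻¹) * Z)).trace :=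
    trace_mul_psd_nonneg hMM hZSTZ
  have hsplit : (M⁻¹ * M⁻¹) * (Zᵀ * (S⁻¹ - T⁻¹) * Z)
      = M⁻¹ * (M⁻¹ * (Zᵀ * (S⁻¹ * Z))) - M⁻¹ * (M⁻¹ * (Zᵀ * (T⁻¹ * Z))) := by
    simp only [Matrix.mul_sub, Matrix.sub_mul, Matrix.mul_assoc]
  rw [hsplit, Matrix.trace_sub] at htr
  have hk : 0 ≤ ρ ^ 2 * σ ^ 4 / (d : ℝ) := by positivity
  apply mul_le_mul_of_nonneg_left _ hk
  linarith
end
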